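/- arXiv:2305.16451 — 6 statements merged into one kernel-verified Lean document; each statement's English description precedes it below -/
import Mathlib

section
/- For every tree T on n+1 ≥ 2 vertices, the rna number of T is at most ⌈n/2⌉. -/
open SimpleGraph

variable {V : Type*}

/-- The set of "negative" edges of `G` under the parity labeling induced by
the bijection `f : V ≃ Fin (Fintype.card V)`: edges whose endpoint labels
have opposite parity. -/
def negSet [Fintype V] (G : SimpleGraph V) (f : V ≃ Fin (Fintype.card V)) : Set (Sym2 V) :=
  {e ∈ G.edgeSet |
    Sym2.lift ⟨fun u v => ((f u : ℕ) % 2 ≠ (f v : ℕ) % 2), fun u v => propext ne_comm⟩ e}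

/-- The number of negative edges under the labeling `f`. -/
noncomputable def negCount [Fintype V] (G : SimpleGraph V) (f : V ≃ Fin (Fintype.card V)) : ℕ :=
  (negSet G f).ncard

/-- The rna number of `G`: the minimum number of negative edges over all parity labelings. -/
noncomputable def rna [Fintype V] (G : SimpleGraph V) : ℕ :=
  sInf (Set.range (negCount G))

/-- `C(G)`: minimum of `||S₁| − |S₂||` over partitions of the vertex set into two
nonempty parts each inducing a connected subgraph. -/
noncomputable def Cval [Fintype V] (G : SimpleGraph V) : ℕ :=
  sInf {d | ∃ S : Set V, S.Nonempty ∧ Sᶜ.Nonempty ∧ (G.induce S).Connected ∧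
    (G.induce Sᶜ).Connected ∧ d = ((S.ncard : ℤ) - (Sᶜ.ncard : ℤ)).natAbs}

/-- `G` is a star: some center `c` is adjacent exactly to all other vertices,
with no other edges. -/
def IsStar (G : SimpleGraph V) : Prop :=
  ∃ c : V, ∀ a b : V, G.Adj a b ↔ (a ≠ b ∧ (a = c ∨ b = c))

/-- Number of even values in `Fin N`. -/
lemma card_even_fin (N : ℕ) :
    Fintype.card {i : Fin N // (i : ℕ) % 2 = 0} = (N + 1) / 2 := by
  classical
  rw [Fintype.card_subtype]
  have h1 : (Finset.univ.filter (fun i : Fin N => (i : ℕ) % 2 = 0)).card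
      = ((Finset.range N).filter (fun m => m % 2 = 0)).card := by
    refine Finset.card_bij (fun i _ => (i : ℕ)) ?_ ?_ ?_
    · intro a ha
      simp only [Finset.mem_filter, Finset.mem_univ, true_and] at ha
      simp [Finset.mem_filter, Finset.mem_range, a.isLt, ha]
    · intro a _ b _ h
      exact Fin.ext h
    · intro b hb
      simp only [Finset.mem_filter, Finset.mem_range] at hb
      exact ⟨⟨b, hb.1⟩, by simp [Finset.mem_filter, hb.2], rfl⟩
  rw [h1]
  have h2 : (Finset.range N).filter (fun m => m % 2 = 0)
      = (Finset.range ((N + 1) / 2)).image (fun k => 2 * k) := by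
    ext m
    simp only [Finset.mem_filter, Finset.mem_range, Finset.mem_image]
    constructor
    · rintro ⟨hm, hm2⟩
      exact ⟨m / 2, by omega, by omega⟩
    · rintro ⟨k, hk, rfl⟩
      omega
  rw [h2, Finset.card_image_of_injective _ (fun a b h => by omega), Finset.card_range]

lemma induce_singleton_connected (G : SimpleGraph V) (v : V) :
    (G.induce ({v} : Set V)).Connected := by
  have : Nonempty ({v} : Set V) := ⟨⟨v, rfl⟩⟩
  constructor
  intro a b
  have : a = b := Subtype.ext (a.2.trans b.2.symm)
  rw [this]

/-- A connected graph has a connected induced subgraph of every size `1 ≤ k ≤ |V|`. -/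
lemma exists_connected_subset [Fintype V] (G : SimpleGraph V) (hG : G.Connected) :
    ∀ k : ℕ, 1 ≤ k → k ≤ Fintype.card V →
      ∃ C : Set V, C.ncard = k ∧ (G.induce C).Connected := by
  classical
  intro k
  induction k with
  | zero => omega
  | succ k ih =>
    intro _ hkle
    rcases Nat.eq_zero_or_pos k with hk0 | hk1
    · subst hk0
      have hne : Nonempty V := hG.nonempty
      obtain ⟨v⟩ := hne
      exact ⟨{v}, Set.ncard_singleton v, induce_singleton_connected G v⟩
    · obtain ⟨C, hCcard, hCconn⟩ := ih hk1 (by omega)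
      have hCne : C.Nonempty := Set.nonempty_of_ncard_ne_zero (by omega)
      have hCne' : Cᶜ.Nonempty := by
        rw [Set.nonempty_compl]
        intro h
        rw [h, Set.ncard_univ, Nat.card_eq_fintype_card] at hCcard
        omega
      obtain ⟨u, hu⟩ := hCne
      obtain ⟨v, hv⟩ := hCne'
      obtain ⟨p⟩ := hG.preconnected u v
      obtain ⟨d, -, hd1, hd2⟩ := p.exists_boundary_dart C hu hv
      refine ⟨C ∪ {d.snd}, ?_, ?_⟩
      · rw [Set.union_singleton, Set.ncard_insert_of_notMem hd2 (Set.toFinite C), hCcard]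
      · exact connected_induce_union hCconn.preconnected (induce_singleton_connected G d.snd).preconnected
          hd1 rfl d.adj

/-- For every tree on n+1 ≥ 2 vertices, the rna number is at most ⌈n/2⌉. -/
theorem rna_tree_le {V : Type*} [Fintype V] (G : SimpleGraph V) (n : ℕ) (hn : 1 ≤ n)
    (hcard : Fintype.card V = n + 1) (hT : G.IsTree) :
    rna G ≤ (n + 1) / 2 := by
  classical
  set N := Fintype.card V with hNdef
  have hN : N = n + 1 := hcard
  -- a connected set of size (N+1)/2
  obtain ⟨C, hCcard, hCconn⟩ := exists_connected_subset G hT.isConnected ((N + 1) / 2)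
    (by omega) (by omega)
  have hCfin : Fintype.card C = (N + 1) / 2 := by
    rw [← hCcard, Set.ncard_eq_toFinset_card', Set.toFinset_card]
  -- build the labeling
  set p : Fin N → Prop := fun i => (i : ℕ) % 2 = 0 with hp
  set q : V → Prop := fun v => v ∈ C with hq
  have h1 : Fintype.card {v // q v} = Fintype.card {i : Fin N // p i} := by
    rw [card_even_fin]
    exact hCfin
  have h2 : Fintype.card {v // ¬ q v} = Fintype.card {i : Fin N // ¬ p i} := by
    rw [Fintype.card_subtype_compl, Fintype.card_subtype_compl, h1, Fintype.card_fin]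
  set f : V ≃ Fin N :=
    (Equiv.sumCompl q).symm.trans
      (((Fintype.equivOfCardEq h1).sumCongr (Fintype.equivOfCardEq h2)).trans
        (Equiv.sumCompl p)) with hf
  have key : ∀ v : V, ((f v : ℕ) % 2 = 0) ↔ v ∈ C := by
    intro v
    by_cases h : q v
    · rw [hf]
      simp only [Equiv.trans_apply, Equiv.sumCompl_symm_apply_of_pos h,
        Equiv.sumCongr_apply, Sum.map_inl, Equiv.sumCompl_apply_inl]
      exact iff_of_true (Fintype.equivOfCardEq h1 ⟨v, h⟩).2 h
    · rw [hf]
      simp only [Equiv.trans_apply, Equiv.sumCompl_symm_apply_of_neg h,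
        Equiv.sumCongr_apply, Sum.map_inr, Equiv.sumCompl_apply_inr]
      exact iff_of_false (Fintype.equivOfCardEq h2 ⟨v, h⟩).2 h
  -- property of negative edges
  have hneg : ∀ e ∈ negSet G f, ∃ x y, G.Adj x y ∧ e = s(x, y) ∧ x ∉ C ∧ y ∈ C := by
    intro e he
    induction e using Sym2.ind with
    | _ x y =>
      obtain ⟨hadj', hpar'⟩ := he
      have hadj : G.Adj x y := G.mem_edgeSet.mp hadj'
      have hpar : ((f x : ℕ) % 2 ≠ (f y : ℕ) % 2) := hpar'
      by_cases hx : x ∈ C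
      · have hy : y ∉ C := by
          intro hy
          exact hpar (((key x).mpr hx).trans ((key y).mpr hy).symm)
        exact ⟨y, x, hadj.symm, Sym2.eq_swap.symm, hy, hx⟩
      · have hy : y ∈ C := by
          by_contra hy
          have hxv : (f x : ℕ) % 2 = 1 := by
            have := (key x).not.mpr hx; omega
          have hyv : (f y : ℕ) % 2 = 1 := by
            have := (key y).not.mpr hy; omega
          exact hpar (hxv.trans hyv.symm)
        exact ⟨x, y, hadj, rfl, hx, hy⟩
  have hVne : Nonempty V := Fintype.card_pos_iff.mp (by omega)
  -- injection of negative edges into Cᶜ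
  set P : Sym2 V → Prop := fun e => ∃ x y, G.Adj x y ∧ e = s(x, y) ∧ x ∉ C ∧ y ∈ C with hP
  set m : Sym2 V → V := fun e => if h : P e then h.choose else Classical.arbitrary V with hm
  have hmaps : ∀ e ∈ negSet G f, m e ∈ Cᶜ := by
    intro e he
    have h : P e := hneg e he
    rw [hm]
    simp only [dif_pos h]
    exact h.choose_spec.choose_spec.2.2.1
  have hinj : Set.InjOn m (negSet G f) := by
    intro e1 he1 e2 he2 hEq
    have h1' : P e1 := hneg e1 he1
    have h2' : P e2 := hneg e2 he2
    rw [hm] at hEq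
    simp only [dif_pos h1', dif_pos h2'] at hEq
    obtain ⟨y1, hadj1, he1', hx1, hy1⟩ := h1'.choose_spec
    obtain ⟨y2, hadj2, he2', hx2, hy2⟩ := h2'.choose_spec
    set x := h1'.choose
    have hx2' : h2'.choose = x := hEq.symm
    rw [hx2'] at hadj2 he2' hx2
    rw [he1', he2']
    -- suffices y1 = y2
    suffices hyy : y1 = y2 by rw [hyy]
    by_contra hne
    -- path through C
    obtain ⟨w0⟩ := hCconn.preconnected ⟨y1, hy1⟩ ⟨y2, hy2⟩
    obtain ⟨w1, hw1supp⟩ : ∃ w1 : G.Walk y1 y2, ∀ z ∈ w1.support, z ∈ C := by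
      refine ⟨w0.map (SimpleGraph.Embedding.induce C).toHom, ?_⟩
      intro z hz
      change z ∈ (w0.map (SimpleGraph.Embedding.induce C).toHom).support at hz
      rw [SimpleGraph.Walk.support_map] at hz
      obtain ⟨z', _, rfl⟩ := List.mem_map.mp hz
      exact z'.2
    obtain ⟨pA, hpApath, hpAsupp⟩ :
        ∃ pa : G.Walk y1 y2, pa.IsPath ∧ ∀ z ∈ pa.support, z ∈ C :=
      ⟨w1.toPath.val, w1.toPath.prop,
        fun z hz => hw1supp z (SimpleGraph.Walk.support_toPath_subset w1 hz)⟩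
    -- the path y1 - x - y2
    have hy1x : y1 ≠ x := fun h => hx1 (h ▸ hy1)
    have hy2x : y2 ≠ x := fun h => hx2 (h ▸ hy2)
    have hwBpath : (SimpleGraph.Walk.cons hadj1.symm
        (SimpleGraph.Walk.cons hadj2 SimpleGraph.Walk.nil) : G.Walk y1 y2).IsPath := by
      simp only [SimpleGraph.Walk.isPath_def, SimpleGraph.Walk.support_cons,
        SimpleGraph.Walk.support_nil]
      simp [hne, hy1x.symm, hy2x]
      try exact ⟨hy1x, fun h => hy2x h.symm⟩
    have huniq := hT.existsUnique_path y1 y2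
    have heqp : pA = SimpleGraph.Walk.cons hadj1.symm
        (SimpleGraph.Walk.cons hadj2 SimpleGraph.Walk.nil) := huniq.unique hpApath hwBpath
    have hxA : x ∈ pA.support := by
      rw [heqp]
      simp
    exact hx1 (hpAsupp x hxA)
  -- conclude
  have hcount : negCount G f ≤ Cᶜ.ncard :=
    Set.ncard_le_ncard_of_injOn m hmaps hinj (Set.toFinite Cᶜ)
  have hcompl : Cᶜ.ncard = (n + 1) / 2 := by
    have := Set.ncard_add_ncard_compl C (Set.toFinite C)
    rw [hCcard, Nat.card_eq_fintype_card] at this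
    omega
  calc rna G ≤ negCount G f := Nat.sInf_le ⟨f, rfl⟩
  _ ≤ (n + 1) / 2 := by rw [hcompl] at hcount; exact hcount
end

section
/- If T is a tree of odd order and v is a leaf of T, then σ⁻(T) ≤ σ⁻(T − v). -/
/-!
Take an optimal labeling `f` of `T − v` by `0, …, m - 1`, where `m = |T| - 1` is even, and let
`u` be the neighbour of `v`. If `f u` is even, give `v` the label `m`; otherwise raise every label
by one and give `v` the label `0`. In both cases all parities on `T − v` shift uniformly and `v`
gets the parity of `u`, so the new labeling of `T` has exactly as many negative edges as `f`.
-/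

open SimpleGraph

variable {V : Type*}

section Labeling

variable [Fintype V]

theorem rna_le_negCount (G : SimpleGraph V) (g : V ≃ Fin (Fintype.card V)) :
    rna G ≤ negCount G g :=
  Nat.sInf_le (Set.mem_range_self g)

theorem exists_negCount_eq_rna (G : SimpleGraph V) : ∃ g, negCount G g = rna G :=
  Nat.sInf_mem ⟨_, Set.mem_range_self (Fintype.equivFin V)⟩

variable [DecidableEq V]

theorem card_eq_card_ne_add_one (v : V) :
    Fintype.card V = Fintype.card {w : V | w ≠ v} + 1 := by
  rw [← Fintype.card_option]
  exact Fintype.card_congr (Equiv.optionSubtypeNe v).symm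

def extendLast (v : V) (f : {w : V | w ≠ v} ≃ Fin (Fintype.card {w : V | w ≠ v})) :
    V ≃ Fin (Fintype.card V) :=
  (Equiv.optionSubtypeNe v).symm.trans <| f.optionCongr.trans <|
    finSuccEquivLast.symm.trans (finCongr (card_eq_card_ne_add_one v).symm)

def extendFirst (v : V) (f : {w : V | w ≠ v} ≃ Fin (Fintype.card {w : V | w ≠ v})) :
    V ≃ Fin (Fintype.card V) :=
  (Equiv.optionSubtypeNe v).symm.trans <| f.optionCongr.trans <|
    (finSuccEquiv _).symm.trans (finCongr (card_eq_card_ne_add_one v).symm)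

variable {v : V} {f : {w : V | w ≠ v} ≃ Fin (Fintype.card {w : V | w ≠ v})}

theorem extendLast_apply_self : (extendLast v f v : ℕ) = Fintype.card {w : V | w ≠ v} := by
  simp [extendLast]

theorem extendLast_apply_of_ne (a : {w : V | w ≠ v}) : (extendLast v f a : ℕ) = f a := by
  simp [extendLast, Equiv.optionSubtypeNe_symm_of_ne a.2]

theorem extendFirst_apply_self : (extendFirst v f v : ℕ) = 0 := by
  simp [extendFirst]

theorem extendFirst_apply_of_ne (a : {w : V | w ≠ v}) : (extendFirst v f a : ℕ) = f a + 1 := by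
  simp [extendFirst, Equiv.optionSubtypeNe_symm_of_ne a.2]

theorem negCount_le_negCount_induce_of_shift {G : SimpleGraph V} {u : V}
    (hu : G.neighborSet v ⊆ {u}) (g : V ≃ Fin (Fintype.card V)) (c : ℕ)
    (hshift : ∀ a : {w : V | w ≠ v}, (g a : ℕ) = f a + c)
    (hvu : (g v : ℕ) % 2 = (g u : ℕ) % 2) :
    negCount G g ≤ negCount (G.induce {w : V | w ≠ v}) f := by
  have hsub : negSet G g ⊆ Sym2.map Subtype.val '' negSet (G.induce {w : V | w ≠ v}) f := by
    rintro e ⟨he, hneg⟩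
    induction e with
    | _ a b =>
      rw [Sym2.lift_mk] at hneg
      rw [mem_edgeSet] at he
      have endpoint_ne : ∀ x y, G.Adj x y → (g x : ℕ) % 2 ≠ (g y : ℕ) % 2 → x ≠ v := by
        rintro x y hxy hxy' rfl
        obtain rfl : y = u := hu hxy
        exact hxy' hvu
      have ha := endpoint_ne a b he hneg
      have hb := endpoint_ne b a he.symm (Ne.symm hneg)
      refine ⟨s(⟨a, ha⟩, ⟨b, hb⟩), ⟨he, ?_⟩, rfl⟩
      have hga : (g a : ℕ) = f ⟨a, ha⟩ + c := hshift ⟨a, ha⟩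
      have hgb : (g b : ℕ) = f ⟨b, hb⟩ + c := hshift ⟨b, hb⟩
      simp only [Sym2.lift_mk]
      omega
  calc negCount G g
      ≤ (Sym2.map Subtype.val '' negSet (G.induce {w : V | w ≠ v}) f).ncard :=
        Set.ncard_le_ncard hsub (Set.toFinite _)
    _ = negCount (G.induce {w : V | w ≠ v}) f :=
        Set.ncard_image_of_injective _ (Sym2.map.injective Subtype.val_injective)

theorem exists_negCount_le_negCount_induce {G : SimpleGraph V} {u : V}
    (hu : G.neighborSet v ⊆ {u}) (hu_ne : u ≠ v) (heven : Even (Fintype.card {w : V | w ≠ v}))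
    (f : {w : V | w ≠ v} ≃ Fin (Fintype.card {w : V | w ≠ v})) :
    ∃ g, negCount G g ≤ negCount (G.induce {w : V | w ≠ v}) f := by
  rcases Nat.even_or_odd (f ⟨u, hu_ne⟩ : ℕ) with hfu | hfu
  · refine ⟨extendLast v f, negCount_le_negCount_induce_of_shift hu _ 0
      (fun a ↦ extendLast_apply_of_ne a) ?_⟩
    rw [extendLast_apply_self, extendLast_apply_of_ne ⟨u, hu_ne⟩,
      Nat.even_iff.mp heven, Nat.even_iff.mp hfu]
  · refine ⟨extendFirst v f, negCount_le_negCount_induce_of_shift hu _ 1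
      (fun a ↦ extendFirst_apply_of_ne a) ?_⟩
    rw [extendFirst_apply_self, extendFirst_apply_of_ne ⟨u, hu_ne⟩]
    have := Nat.odd_iff.mp hfu
    omega

end Labeling

theorem rna_le_of_deleteLeaf_general {V : Type*} [Fintype V] [DecidableEq V] (G : SimpleGraph V)
    (hodd : Odd (Fintype.card V)) (v : V)
    (hleaf : (G.neighborSet v).ncard = 1) :
    rna G ≤ rna (G.induce {w : V | w ≠ v}) := by
  obtain ⟨u, hu⟩ := Set.ncard_eq_one.mp hleaf
  have hu_ne : u ≠ v := ((G.mem_neighborSet v u).mp (by simp [hu])).ne'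
  have heven : Even (Fintype.card {w : V | w ≠ v}) := by
    simpa [card_eq_card_ne_add_one v, Nat.odd_add_one] using hodd
  obtain ⟨f, hf⟩ := exists_negCount_eq_rna (G.induce {w : V | w ≠ v})
  obtain ⟨g, hg⟩ := exists_negCount_le_negCount_induce hu.subset hu_ne heven f
  calc rna G ≤ negCount G g := rna_le_negCount G g
    _ ≤ negCount (G.induce {w : V | w ≠ v}) f := hg
    _ = rna (G.induce {w : V | w ≠ v}) := hf

/-- If T is a tree of odd order and v a leaf, then σ⁻(T) ≤ σ⁻(T − v). -/
theorem rna_le_of_deleteLeaf {V : Type*} [Fintype V] [DecidableEq V] (G : SimpleGraph V)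
    (hodd : Odd (Fintype.card V)) (hT : G.IsTree) (v : V)
    (hleaf : (G.neighborSet v).ncard = 1) :
    rna G ≤ rna (G.induce {w : V | w ≠ v}) :=
  rna_le_of_deleteLeaf_general G hodd v hleaf
end

section
/- If T is a tree on n ≤ 7 vertices which is not a star, then σ⁻(T) ≤ 2. -/
open SimpleGraph

variable {V : Type*}

section Aux
set_option linter.unusedSectionVars false
variable {V : Type*} [DecidableEq V]

lemma tree_path_unique {G : SimpleGraph V} (hT : G.IsTree) {a b : V} {p q : G.Walk a b}
    (hp : p.IsPath) (hq : q.IsPath) : p = q := by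
  have := isAcyclic_iff_path_unique.mp hT.IsAcyclic (p := ⟨p, hp⟩) (q := ⟨q, hq⟩)
  exact congrArg Subtype.val this

lemma concat_isPath {G : SimpleGraph V} {a b c : V} {p : G.Walk a b} (hp : p.IsPath)
    (h : G.Adj b c) (hc : c ∉ p.support) : (p.concat h).IsPath := by
  rw [Walk.isPath_def, Walk.support_concat]
  rw [Walk.isPath_def] at hp
  simp [List.concat_eq_append, List.nodup_append, hp, hc]
  exact fun a ha hac => hc (hac ▸ ha)

lemma dist_step {G : SimpleGraph V} (hT : G.IsTree) {a b : V} (hab : G.Adj a b) (z : V) :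
    G.dist z b = G.dist z a + 1 ∨ G.dist z a = G.dist z b + 1 := by
  have hc := hT.isConnected
  have h1 : G.dist a b = 1 := dist_eq_one_iff_adj.mpr hab
  have t1 : G.dist z b ≤ G.dist z a + 1 := by
    calc G.dist z b ≤ G.dist z a + G.dist a b := hc.dist_triangle
    _ = G.dist z a + 1 := by rw [h1]
  have t2 : G.dist z a ≤ G.dist z b + 1 := by
    have h1' : G.dist b a = 1 := dist_eq_one_iff_adj.mpr hab.symm
    calc G.dist z a ≤ G.dist z b + G.dist b a := hc.dist_triangle
    _ = G.dist z b + 1 := by rw [h1']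
  have hne : G.dist z a ≠ G.dist z b := by
    intro he
    obtain ⟨p, hp, hpl⟩ := hc.exists_path_of_dist z a
    obtain ⟨q, hq, hql⟩ := hc.exists_path_of_dist z b
    have hbp : b ∉ p.support := by
      intro hb
      have h3 := congrArg Walk.length (p.take_spec hb)
      rw [Walk.length_append] at h3
      have h4 : G.dist z b ≤ (p.takeUntil b hb).length := dist_le _
      have h5 : G.dist b a ≤ (p.dropUntil b hb).length := dist_le _
      rw [dist_eq_one_iff_adj.mpr hab.symm] at h5
      omega
    have := tree_path_unique hT (concat_isPath hp hab hbp) hq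
    have := congrArg Walk.length this
    rw [Walk.length_concat] at this
    omega
  omega

set_option linter.unusedSectionVars false

/-- crossing lemma: the only edge between the two distance-sides of an edge `uv` is `uv`. -/
lemma crossing {G : SimpleGraph V} (hT : G.IsTree) {u v x y : V} (huv : G.Adj u v)
    (hxy : G.Adj x y) (hx : G.dist x u < G.dist x v) (hy : G.dist y v < G.dist y u) :
    x = u ∧ y = v := by
  have hc := hT.isConnected
  have hxv : G.dist x v = G.dist x u + 1 := by rcases dist_step hT huv x with h | h <;> omega
  have hyu : G.dist y u = G.dist y v + 1 := by rcases dist_step hT huv y with h | h <;> omega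
  set t := G.dist x u with ht
  set s := G.dist y v with hs
  -- s = t or s = t + 2
  have hst : s = t ∨ s = t + 2 := by
    have c1 : G.dist v y = G.dist y v := SimpleGraph.dist_comm
    have c2 : G.dist v x = G.dist x v := SimpleGraph.dist_comm
    rcases dist_step hT hxy v with h | h <;> omega
  obtain ⟨P, hP, hPl⟩ := hc.exists_path_of_dist x u
  obtain ⟨Q, hQ, hQl⟩ := hc.exists_path_of_dist y v
  have hvP : v ∉ P.support := by
    intro hv
    have : G.dist x v ≤ (P.takeUntil v hv).length := dist_le _
    have := P.length_takeUntil_le hv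
    omega
  have hyP : y ∉ P.support := by
    intro hyp
    have : G.dist y u ≤ (P.dropUntil y hyp).length := dist_le _
    have h3 := congrArg Walk.length (P.take_spec hyp)
    rw [Walk.length_append] at h3
    omega
  have huQ : u ∉ Q.support := by
    intro hu
    have : G.dist y u ≤ (Q.takeUntil u hu).length := dist_le _
    have := Q.length_takeUntil_le hu
    omega
  have hR : (Walk.cons hxy.symm P).IsPath := hP.cons hyP
  have hQ' : (Q.concat huv.symm).IsPath := concat_isPath hQ huv.symm huQ
  have heq : Walk.cons hxy.symm P = Q.concat huv.symm := tree_path_unique hT hR hQ'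
  have hvR : v ∈ (Walk.cons hxy.symm P).support := by
    rw [heq, Walk.support_concat]
    simp [Walk.end_mem_support]
  rw [Walk.support_cons] at hvR
  rcases List.mem_cons.mp hvR with hvy | hvP' 
  · -- v = y
    subst hvy
    have hs0 : s = 0 := by rw [hs]; exact SimpleGraph.dist_self
    exact ⟨hc.dist_eq_zero_iff.mp (by omega), rfl⟩
  · exact absurd hvP' hvP

lemma side_total {G : SimpleGraph V} (hT : G.IsTree) {u v : V} (huv : G.Adj u v) (w : V) :
    G.dist w u < G.dist w v ∨ G.dist w v < G.dist w u := by
  rcases dist_step hT huv w with h | h <;> omega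

lemma exists_leaf [Fintype V] {G : SimpleGraph V} (hT : G.IsTree) {u v : V} (huv : G.Adj u v)
    (hv2 : ∃ y, G.Adj v y ∧ y ≠ u) :
    ∃ x p : V, G.dist x v < G.dist x u ∧ x ≠ v ∧ G.Adj x p ∧ ∀ z, G.Adj x z → z = p := by
  classical
  have hc := hT.isConnected
  obtain ⟨y, hvy, hyu⟩ := hv2
  have hduv : G.dist u v = 1 := dist_eq_one_iff_adj.mpr huv
  have hdvu : G.dist v u = 1 := dist_eq_one_iff_adj.mpr huv.symm
  have hyB : G.dist y v < G.dist y u := by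
    rcases side_total hT huv y with h | h
    · exact absurd (crossing hT huv hvy.symm h (by simp [SimpleGraph.dist_self, hdvu])).1 hyu
    · exact h
  have hdyv : G.dist y v = 1 := dist_eq_one_iff_adj.mpr hvy.symm
  have hdyu : G.dist y u = 2 := by
    have c1 : G.dist u y = G.dist y u := SimpleGraph.dist_comm
    have hne : G.dist y u ≠ 0 := by
      intro h0
      exact hyu (hc.dist_eq_zero_iff.mp h0)
    rcases dist_step hT hvy u with h | h <;> omega
  set F : Finset V := Finset.univ.filter (fun w => G.dist w v < G.dist w u) with hF
  have hyF : y ∈ F := by simp [hF, hyB]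
  obtain ⟨w, hwF, hwmax⟩ := F.exists_max_image (fun w => G.dist w u) ⟨y, hyF⟩
  have hwB : G.dist w v < G.dist w u := by simpa [hF] using hwF
  have hD2 : 2 ≤ G.dist w u := by
    have := hwmax y hyF
    omega
  have hwv : w ≠ v := by rintro rfl; omega
  obtain ⟨P, hP, hPl⟩ := hc.exists_path_of_dist w u
  set D := G.dist w u with hDdef
  cases P with
  | nil => simp at hPl; omega
  | @cons _ p0 _ h q =>
    rw [Walk.length_cons] at hPl
    rw [Walk.cons_isPath_iff] at hP
    obtain ⟨hq, hwq⟩ := hP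
    have hdq : G.dist p0 u ≤ D - 1 := by
      have := dist_le q
      omega
    refine ⟨w, p0, hwB, hwv, h, ?_⟩
    intro z hz
    have hstep : G.dist z u = D + 1 ∨ G.dist z u = D - 1 := by
      have c1 : G.dist u z = G.dist z u := SimpleGraph.dist_comm
      have c2 : G.dist u w = G.dist w u := SimpleGraph.dist_comm
      rcases dist_step hT hz u with hh | hh <;> omega
    rcases hstep with hh | hh
    · exfalso
      have hzB : G.dist z v < G.dist z u := by
        rcases side_total hT huv z with hzA | hzB
        · exact absurd (crossing hT huv hz.symm hzA hwB).2 hwv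
        · exact hzB
      have : z ∈ F := by simp [hF, hzB]
      have := hwmax z this
      omega
    · by_contra hzp
      obtain ⟨Pz, hPz, hPzl⟩ := hc.exists_path_of_dist z u
      have hwPz : w ∉ Pz.support := by
        intro hw
        have : G.dist w u ≤ (Pz.dropUntil w hw).length := dist_le _
        have h3 := congrArg Walk.length (Pz.take_spec hw)
        rw [Walk.length_append] at h3
        omega
      have heq := tree_path_unique hT (hPz.cons hwPz (h := hz)) (hq.cons hwq (h := h))
      have hs := congrArg Walk.support heq
      rw [Walk.support_cons, Walk.support_cons, Pz.support_eq_cons, q.support_eq_cons] at hs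
      simp at hs
      exact hzp (by have h' := congrArg List.head? hs; rw [Pz.support_eq_cons, q.support_eq_cons] at h'; exact Option.some.inj h')

lemma exists_internal {G : SimpleGraph V} (hT : G.IsTree)
    (hstar : ¬ ∃ c : V, ∀ a b : V, G.Adj a b ↔ (a ≠ b ∧ (a = c ∨ b = c))) :
    ∃ u v : V, G.Adj u v ∧ (∃ y, G.Adj u y ∧ y ≠ v) ∧ (∃ z, G.Adj v z ∧ z ≠ u) := by
  classical
  have hc := hT.isConnected
  by_contra hint
  push_neg at hint
  apply hstar
  by_cases hdeg : ∃ c y z : V, G.Adj c y ∧ G.Adj c z ∧ y ≠ z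
  · obtain ⟨c, y, z, hcy, hcz, hyz⟩ := hdeg
    have hadj : ∀ w, w ≠ c → G.Adj c w := by
      intro w hw
      have hr : G.dist c w ≠ 0 := by
        intro h0
        exact hw (hc.dist_eq_zero_iff.mp h0).symm
      obtain ⟨P, hP, hPl⟩ := hc.exists_path_of_dist c w
      cases P with
      | nil => exact absurd SimpleGraph.dist_self hr
      | @cons _ m _ h1 q =>
        rw [Walk.cons_isPath_iff] at hP
        obtain ⟨hq, hcq⟩ := hP
        -- edge c m; q : Walk m w
        cases q with
        | nil => exact h1
        | @cons _ m2 _ h2 q2 =>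
          exfalso
          by_cases hy' : ∃ yy, G.Adj c yy ∧ yy ≠ m
          · have := hint c m h1 hy' m2 h2
            subst this
            simp at hcq
          · push_neg at hy'
            have e1 := hy' y hcy
            have e2 := hy' z hcz
            exact hyz (e1.trans e2.symm)
  -- now prove star shape
    refine ⟨c, fun a b => ⟨fun hab => ?_, fun ⟨hne, hor⟩ => ?_⟩⟩
    · refine ⟨hab.ne, ?_⟩
      by_contra hcon
      push_neg at hcon
      obtain ⟨hac, hbc⟩ := hcon
      have h1 : G.Adj c a := hadj a hac
      have h2 : G.Adj c b := hadj b hbc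
      -- two distinct paths a → b
      have p1 : (Walk.cons hab Walk.nil : G.Walk a b).IsPath := by simp [hab.ne]
      have p2 : (Walk.cons h1.symm (Walk.cons h2 Walk.nil) : G.Walk a b).IsPath := by
        simp [Walk.isPath_def, List.nodup_cons, hac, hab.ne, Ne.symm hbc]
      have := tree_path_unique hT p1 p2
      have := congrArg Walk.length this
      simp at this
    · rcases hor with rfl | rfl
      · exact hadj b (fun h => hne h.symm)
      · exact (hadj a hne).symm
  · push_neg at hdeg
    obtain ⟨v0⟩ := hc.nonempty
    have hadj : ∀ w, w ≠ v0 → G.Adj v0 w := by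
      intro w hw
      have hr : G.dist v0 w ≠ 0 := by
        intro h0
        exact hw (hc.dist_eq_zero_iff.mp h0).symm
      obtain ⟨P, hP, hPl⟩ := hc.exists_path_of_dist v0 w
      cases P with
      | nil => exact absurd SimpleGraph.dist_self hr
      | @cons _ m _ h1 q =>
        rw [Walk.cons_isPath_iff] at hP
        obtain ⟨hq, hcq⟩ := hP
        cases q with
        | nil => exact h1
        | @cons _ m2 _ h2 q2 =>
          exfalso
          have := hdeg m v0 m2 h1.symm h2
          subst this
          simp at hcq
    refine ⟨v0, fun a b => ⟨fun hab => ?_, fun ⟨hne, hor⟩ => ?_⟩⟩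
    · refine ⟨hab.ne, ?_⟩
      by_contra hcon
      push_neg at hcon
      obtain ⟨hac, hbc⟩ := hcon
      have h1 : G.Adj v0 a := hadj a hac
      have h2 : G.Adj v0 b := hadj b hbc
      exact hab.ne (hdeg v0 a b h1 h2)
    · rcases hor with rfl | rfl
      · exact hadj b (fun h => hne h.symm)
      · exact (hadj a hne).symm

lemma evens_range (n : ℕ) : ((Finset.range n).filter (fun i => i % 2 = 0)).card = (n+1)/2 := by
  induction n with
  | zero => simp
  | succ m ih =>
    rw [Finset.range_add_one, Finset.filter_insert]
    by_cases h : m % 2 = 0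
    · rw [if_pos h, Finset.card_insert_of_notMem (by simp)]
      omega
    · rw [if_neg h]
      omega

lemma evens_fin (n : ℕ) :
    (Finset.univ.filter (fun i : Fin n => (i:ℕ) % 2 = 0)).card = (n+1)/2 := by
  rw [← evens_range n]
  refine Finset.card_bij (fun a _ => (a : ℕ)) ?_ ?_ ?_
  · intro a ha
    simp only [Finset.mem_filter, Finset.mem_range]
    exact ⟨a.isLt, (Finset.mem_filter.mp ha).2⟩
  · intro a _ b _ h
    exact Fin.val_injective h
  · intro b hb
    simp only [Finset.mem_filter, Finset.mem_range] at hb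
    exact ⟨⟨b, hb.1⟩, by simp [hb.2], rfl⟩

lemma exists_labeling [Fintype V] (S : Set V)
    (hS : S.ncard = (Finset.univ.filter
      (fun i : Fin (Fintype.card V) => (i:ℕ) % 2 = 0)).card) :
    ∃ f : V ≃ Fin (Fintype.card V), ∀ w, ((f w : ℕ) % 2 = 0 ↔ w ∈ S) := by
  classical
  set N := Fintype.card V
  set p : Fin N → Prop := fun i => (i:ℕ) % 2 = 0 with hp
  have hSc : Fintype.card ↥S = S.ncard := by
    rw [← Nat.card_eq_fintype_card, Nat.card_coe_set_eq]
  have hc1 : Fintype.card S = Fintype.card {i // p i} := by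
    rw [hSc, hS]
    exact (Fintype.card_subtype _).symm
  have hc2 : Fintype.card ↥(Sᶜ) = Fintype.card {i // ¬ p i} := by
    have hScc : Fintype.card ↥(Sᶜ) = N - S.ncard := by
      have h2 := Set.ncard_add_ncard_compl S (Set.toFinite S) (Set.toFinite Sᶜ)
      rw [Nat.card_eq_fintype_card] at h2
      rw [← Nat.card_eq_fintype_card, Nat.card_coe_set_eq]
      omega
    rw [hScc, hS, Fintype.card_subtype_compl, Fintype.card_fin, Fintype.card_subtype]
  obtain e1 := Fintype.equivOfCardEq hc1
  obtain e2 := Fintype.equivOfCardEq hc2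
  refine ⟨(Equiv.Set.sumCompl S).symm.trans ((e1.sumCongr e2).trans (Equiv.sumCompl p)), ?_⟩
  intro w
  by_cases hw : w ∈ S
  · simp only [Equiv.trans_apply, Equiv.Set.sumCompl_symm_apply_of_mem hw,
      Equiv.sumCongr_apply, Sum.map_inl, Equiv.sumCompl_apply_inl]
    exact ⟨fun _ => hw, fun _ => (e1 ⟨w, hw⟩).2⟩
  · simp only [Equiv.trans_apply, Equiv.Set.sumCompl_symm_apply_of_notMem hw,
      Equiv.sumCongr_apply, Sum.map_inr, Equiv.sumCompl_apply_inr]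
    exact ⟨fun h => absurd h (e2 ⟨w, hw⟩).2, fun h => absurd h hw⟩

lemma core [Fintype V] {G : SimpleGraph V} (hT : G.IsTree) {u v : V} (huv : G.Adj u v)
    (hu2 : ∃ y, G.Adj u y ∧ y ≠ v) (hv2 : ∃ z, G.Adj v z ∧ z ≠ u)
    (hn : Fintype.card V ≤ 7)
    (hab : {w | G.dist w u < G.dist w v}.ncard ≤ {w | G.dist w v < G.dist w u}.ncard) :
    ∃ S : Set V, S.ncard = (Fintype.card V + 1)/2 ∧ ∃ e1 e2 : Sym2 V,
      ∀ x y, G.Adj x y → x ∈ S → y ∉ S → s(x,y) = e1 ∨ s(x,y) = e2 := by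
  classical
  have hc := hT.isConnected
  set A := {w | G.dist w u < G.dist w v} with hA
  set B := {w | G.dist w v < G.dist w u} with hB
  have hduv : G.dist u v = 1 := dist_eq_one_iff_adj.mpr huv
  have hdvu : G.dist v u = 1 := dist_eq_one_iff_adj.mpr huv.symm
  have hBcompl : B = Aᶜ := by
    ext w
    have := side_total hT huv w
    simp only [hA, hB, Set.mem_setOf_eq, Set.mem_compl_iff]
    omega
  have hsum : A.ncard + B.ncard = Fintype.card V := by
    rw [hBcompl]
    have := Set.ncard_add_ncard_compl A (Set.toFinite A) (Set.toFinite Aᶜ)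
    rw [Nat.card_eq_fintype_card] at this
    exact this
  have huA : u ∈ A := by simp [hA, SimpleGraph.dist_self, hduv]
  have hvB : v ∈ B := by simp [hB, SimpleGraph.dist_self, hdvu]
  have haA : 2 ≤ A.ncard := by
    obtain ⟨y, huy, hyv⟩ := hu2
    have hyA : y ∈ A := by
      rcases side_total hT huv y with h | h
      · exact h
      · exact absurd (crossing hT huv huy (by simp [SimpleGraph.dist_self, hduv]) h).2 hyv
    have hsub : ({u, y} : Set V) ⊆ A := by
      intro z hz
      rcases hz with rfl | hz
      · exact huA
      · simpa using hz ▸ hyA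
    have := Set.ncard_le_ncard hsub (Set.toFinite A)
    rwa [Set.ncard_pair (huy.ne)] at this
  set k := (Fintype.card V + 1)/2 with hk
  by_cases hBk : B.ncard = k
  · refine ⟨B, hBk, s(u,v), s(u,v), ?_⟩
    intro x y hxy hx hy
    have hyA : y ∈ A := by
      rw [hBcompl] at hy
      simp only [Set.mem_compl_iff, not_not] at hy
      exact hy
    obtain ⟨h1, h2⟩ := crossing hT huv hxy.symm hyA hx
    left
    rw [h1, h2, Sym2.eq_swap]
  by_cases hAk : A.ncard = k
  · refine ⟨A, hAk, s(u,v), s(u,v), ?_⟩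
    intro x y hxy hx hy
    have hyB : y ∈ B := by
      rcases side_total hT huv y with h | h
      · exact absurd h hy
      · exact h
    obtain ⟨h1, h2⟩ := crossing hT huv hxy hx hyB
    left
    rw [h1, h2]
  · obtain ⟨xh, p, hxhB, hxhv, hxhp, huniq⟩ := exists_leaf hT huv hv2
    have hxhB' : xh ∈ B := hxhB
    refine ⟨B \ {xh}, ?_, s(u,v), s(xh,p), ?_⟩
    · rw [Set.ncard_diff_singleton_of_mem hxhB']
      omega
    · intro x y hxy hx hy
      obtain ⟨hxB, hxne⟩ := hx
      by_cases hyxh : y = xh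
      · subst hyxh
        right
        rw [huniq x hxy.symm, Sym2.eq_swap]
      · have hyA : y ∈ A := by
          have : y ∉ B := fun hyB => hy ⟨hyB, hyxh⟩
          rw [hBcompl] at this
          simpa using this
        obtain ⟨h1, h2⟩ := crossing hT huv hxy.symm hyA hxB
        left
        rw [h1, h2, Sym2.eq_swap]


end Aux

/-- A non-star tree on at most 7 vertices has rna number at most 2. -/
theorem rna_le_two_of_small {V : Type*} [Fintype V] (G : SimpleGraph V) (n : ℕ)
    (hcard : Fintype.card V = n) (hn : n ≤ 7) (hT : G.IsTree) (hstar : ¬ IsStar G) :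
    rna G ≤ 2 := by
  classical
  subst hcard
  have hstar' : ¬ ∃ c : V, ∀ a b : V, G.Adj a b ↔ (a ≠ b ∧ (a = c ∨ b = c)) := hstar
  obtain ⟨u, v, huv, hu2, hv2⟩ := exists_internal hT hstar'
  have hkey : ∃ S : Set V, S.ncard = (Fintype.card V + 1)/2 ∧ ∃ e1 e2 : Sym2 V,
      ∀ x y, G.Adj x y → x ∈ S → y ∉ S → s(x,y) = e1 ∨ s(x,y) = e2 := by
    rcases le_total ({w | G.dist w u < G.dist w v}.ncard)
        ({w | G.dist w v < G.dist w u}.ncard) with h | h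
    · exact core hT huv hu2 hv2 hn h
    · exact core hT huv.symm hv2 hu2 hn h
  obtain ⟨S, hScard, e1, e2, hcross⟩ := hkey
  obtain ⟨f, hf⟩ := exists_labeling S (hScard.trans (evens_fin _).symm)
  have hsub : negSet G f ⊆ {e1, e2} := by
    intro e he
    induction e using Sym2.inductionOn with
    | hf x y =>
      obtain ⟨hadj, hne⟩ := he
      rw [SimpleGraph.mem_edgeSet] at hadj
      rw [Sym2.lift_mk] at hne
      have hx2 : (f x : ℕ) % 2 < 2 := Nat.mod_lt _ (by norm_num)
      have hy2 : (f y : ℕ) % 2 < 2 := Nat.mod_lt _ (by norm_num)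
      by_cases hx0 : (f x : ℕ) % 2 = 0
      · have hxS : x ∈ S := (hf x).mp hx0
        have hyS : y ∉ S := fun hyS => hne (by rw [hx0, (hf y).mpr hyS])
        rcases hcross x y hadj hxS hyS with h | h <;> simp [h]
      · have hy0 : (f y : ℕ) % 2 = 0 := by omega
        have hyS : y ∈ S := (hf y).mp hy0
        have hxS : x ∉ S := fun hxS => hx0 ((hf x).mpr hxS)
        rcases hcross y x hadj.symm hyS hxS with h | h <;>
          · rw [Sym2.eq_swap] at h
            simp [h]
  have hcount : negCount G f ≤ 2 := by
    rw [negCount]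
    calc (negSet G f).ncard ≤ ({e1, e2} : Set (Sym2 V)).ncard :=
          Set.ncard_le_ncard hsub (Set.toFinite _)
    _ ≤ 2 := by
        have h1 := Set.ncard_insert_le e1 ({e2} : Set (Sym2 V))
        rw [Set.ncard_singleton] at h1
        omega
  have hle : rna G ≤ negCount G f := Nat.sInf_le ⟨f, rfl⟩
  omega
end

section
/- Let T be the tree of depth 2 in which every non-leaf vertex has degree n, where n = 2m+1 > 2 is odd; that is, the root has n children and each depth-1 vertex has n−1 children. Then σ⁻(T) = n, and in particular σ⁻(T) > ⌈Δ(T)/2⌉ = ⌈n/2⌉. -/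
open SimpleGraph

variable {V : Type*}

/-- The perfect `n`-ary tree of depth 2: a root `Sum.inl ()`, its `n` children
`Sum.inr (Sum.inl i)`, and for each child `i` its `n - 1` leaf children
`Sum.inr (Sum.inr (i, j))`.  It has `1 + n + n*(n-1) = n² + 1` vertices and
every non-leaf vertex has degree `n`. -/
def perfTree (n : ℕ) : SimpleGraph (Unit ⊕ (Fin n ⊕ Fin n × Fin (n - 1))) :=
  SimpleGraph.fromRel (fun a b =>
    (∃ i : Fin n, a = Sum.inl () ∧ b = Sum.inr (Sum.inl i)) ∨
    (∃ (i : Fin n) (j : Fin (n - 1)), a = Sum.inr (Sum.inl i) ∧ b = Sum.inr (Sum.inr (i, j))))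

namespace RnaAux
open Finset

def parityEquiv (m : ℕ) : Fin m ⊕ Fin m ≃ Fin (2 * m) where
  toFun x := Sum.elim (fun i => ⟨2 * i.val, by omega⟩) (fun i => ⟨2 * i.val + 1, by omega⟩) x
  invFun j := if h : j.val % 2 = 0 then Sum.inl ⟨j.val / 2, by omega⟩
    else Sum.inr ⟨j.val / 2, by omega⟩
  left_inv x := by
    rcases x with i | i
    · simp
    · simp only [Sum.elim_inr]
      simp only [show ¬ ((2 * i.val + 1) % 2 = 0) by omega, ↓reduceDIte]
      congr 1; ext; simp; omega
  right_inv j := by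
    by_cases h : j.val % 2 = 0
    · simp only [dif_pos h, Sum.elim_inl]; ext; simp; omega
    · simp only [dif_neg h, Sum.elim_inr]; ext; simp; omega

lemma parityEquiv_parity (m : ℕ) (x : Fin m ⊕ Fin m) :
    ((parityEquiv m) x).val % 2 = 0 ↔ x.isLeft := by
  rcases x with i | i
  · simp [parityEquiv]
  · simp [parityEquiv]

lemma card_even_parity (m : ℕ) {W : Type*} [Fintype W] [DecidableEq W]
    (f : W ≃ Fin (2 * m)) :
    #(univ.filter fun v => (f v).val % 2 = 0) = m := by
  have h1 : #(univ.filter fun v => (f v).val % 2 = 0)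
      = #(univ.filter fun j : Fin (2*m) => j.val % 2 = 0) := by
    apply Finset.card_bij (fun v _ => f v)
    · intro a ha; simp at ha ⊢; exact ha
    · intro a _ b _ h; exact f.injective h
    · intro b hb; exact ⟨f.symm b, by simpa using hb, by simp⟩
  rw [h1]
  have h2 : #(univ.filter fun j : Fin (2*m) => j.val % 2 = 0)
      = #(univ.filter fun x : Fin m ⊕ Fin m => x.isLeft) := by
    apply (Finset.card_bij (fun x _ => (parityEquiv m) x) _ _ _).symm
    · intro a ha; simp only [mem_filter, mem_univ, true_and] at ha ⊢
      rw [parityEquiv_parity]; simpa using ha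
    · intro a _ b _ h; exact (parityEquiv m).injective h
    · intro b hb; refine ⟨(parityEquiv m).symm b, ?_, by simp⟩
      simp only [mem_filter, mem_univ, true_and] at hb ⊢
      rw [← parityEquiv_parity m ((parityEquiv m).symm b)]
      simpa using hb
  rw [h2]
  have h3 : (univ.filter fun x : Fin m ⊕ Fin m => x.isLeft)
      = univ.map ⟨Sum.inl, Sum.inl_injective⟩ := by
    ext x; rcases x with a | a <;> simp
  rw [h3, Finset.card_map, Finset.card_fin]

lemma card_filter_sum {α β : Type*} [Fintype α] [Fintype β] [DecidableEq α] [DecidableEq β]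
    (q : α ⊕ β → Prop) [DecidablePred q] :
    #(univ.filter q)
      = #(univ.filter fun a => q (Sum.inl a)) + #(univ.filter fun b => q (Sum.inr b)) := by
  have : univ.filter q = ((univ.filter fun a => q (Sum.inl a)).map ⟨Sum.inl, Sum.inl_injective⟩)
      ∪ ((univ.filter fun b => q (Sum.inr b)).map ⟨Sum.inr, Sum.inr_injective⟩) := by
    ext x
    rcases x with a | a <;> simp
  rw [this, Finset.card_union_of_disjoint (by simp [Finset.disjoint_left]),
    Finset.card_map, Finset.card_map]

lemma card_filter_prod {α β : Type*} [Fintype α] [Fintype β] [DecidableEq α] [DecidableEq β]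
    (q : α × β → Prop) [DecidablePred q] :
    #(univ.filter q) = ∑ a : α, #(univ.filter fun b => q (a, b)) := by
  rw [Finset.card_eq_sum_card_fiberwise (f := Prod.fst) (t := univ) (fun x _ => mem_univ _)]
  refine Finset.sum_congr rfl fun a _ => ?_
  apply Finset.card_nbij' (fun x => x.2) (fun b => (a, b))
  · rintro ⟨x1, x2⟩ hx
    rw [Finset.mem_coe] at hx ⊢
    simp only [mem_filter, mem_univ, true_and] at hx ⊢
    obtain ⟨h1, rfl⟩ := hx
    exact h1
  · intro b hb; simp at hb ⊢; exact hb
  · rintro ⟨x1, x2⟩ hx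
    rw [Finset.mem_coe] at hx
    simp only [mem_filter, mem_univ, true_and] at hx ⊢
    rw [hx.2]
  · intro b hb; simp

lemma card_filter_val_lt (N k : ℕ) (hk : k ≤ N) :
    #(univ.filter fun i : Fin N => i.val < k) = k := by
  have h : #(univ.filter fun i : Fin N => i.val < k) = #(univ : Finset (Fin k)) := by
    apply Finset.card_bij (fun (a : Fin N) (ha : a ∈ univ.filter fun i : Fin N => i.val < k) =>
      (⟨a.val, by simpa using ha⟩ : Fin k))
    · intro a ha; exact mem_univ _
    · intro a _ b _ h
      apply Fin.ext
      simpa [Fin.ext_iff] using h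
    · intro b _
      exact ⟨⟨b.val, lt_of_lt_of_le b.isLt hk⟩, by simpa using b.isLt, rfl⟩
  rw [h, Finset.card_univ, Fintype.card_fin]

/- ------------- tree-specific part ------------- -/

abbrev Vt (n : ℕ) := Unit ⊕ (Fin n ⊕ Fin n × Fin (n - 1))

abbrev rt (n : ℕ) : Vt n := Sum.inl ()
abbrev ch {n : ℕ} (i : Fin n) : Vt n := Sum.inr (Sum.inl i)
abbrev lf {n : ℕ} (i : Fin n) (j : Fin (n-1)) : Vt n := Sum.inr (Sum.inr (i, j))

variable {n : ℕ}

def pb (f : Vt n ≃ Fin (Fintype.card (Vt n))) (v : Vt n) : Bool := (f v).val % 2 == 0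

lemma pb_iff (f : Vt n ≃ Fin (Fintype.card (Vt n))) (u v : Vt n) :
    (f u).val % 2 ≠ (f v).val % 2 ↔ pb f u ≠ pb f v := by
  rw [ne_eq, ne_eq, Bool.eq_iff_iff]
  simp only [pb, beq_iff_eq]
  omega

def F1 (f : Vt n ≃ Fin (Fintype.card (Vt n))) : Finset (Sym2 (Vt n)) :=
  (univ.filter fun i : Fin n => pb f (ch i) ≠ pb f (rt n)).image (fun i => s(rt n, ch i))

def F2 (f : Vt n ≃ Fin (Fintype.card (Vt n))) : Finset (Sym2 (Vt n)) :=
  (univ.filter fun x : Fin n × Fin (n-1) => pb f (lf x.1 x.2) ≠ pb f (ch x.1)).image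
    (fun x => s(ch x.1, lf x.1 x.2))

lemma negSet_eq (f : Vt n ≃ Fin (Fintype.card (Vt n))) :
    negSet (perfTree n) f = ↑(F1 f ∪ F2 f) := by
  ext e
  induction e using Sym2.ind with
  | _ u v =>
    simp only [negSet, Set.mem_setOf_eq, SimpleGraph.mem_edgeSet, Sym2.lift_mk,
      Finset.coe_union, Set.mem_union, F1, F2, Finset.coe_image, Finset.coe_filter,
      Set.mem_image, Set.mem_setOf_eq, mem_univ, true_and, perfTree, fromRel_adj]
    rw [pb_iff]
    constructor
    · rintro ⟨⟨hne, h | h⟩, hp⟩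
      · rcases h with ⟨i, rfl, rfl⟩ | ⟨i, j, rfl, rfl⟩
        · exact Or.inl ⟨i, by first | exact hp | exact hp.symm, rfl⟩
        · exact Or.inr ⟨(i, j), by first | exact hp | exact hp.symm, rfl⟩
      · rcases h with ⟨i, rfl, rfl⟩ | ⟨i, j, rfl, rfl⟩
        · exact Or.inl ⟨i, by first | exact hp | exact hp.symm, Sym2.eq_swap⟩
        · exact Or.inr ⟨(i, j), by first | exact hp | exact hp.symm, Sym2.eq_swap⟩
    · rintro (⟨i, hi, he⟩ | ⟨x, hx, he⟩)
      · rw [Sym2.eq_iff] at he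
        rcases he with ⟨rfl, rfl⟩ | ⟨rfl, rfl⟩
        · exact ⟨⟨by simp [rt, ch], Or.inl (Or.inl ⟨i, rfl, rfl⟩)⟩,
            by first | exact hi | exact hi.symm⟩
        · exact ⟨⟨by simp [rt, ch], Or.inr (Or.inl ⟨i, rfl, rfl⟩)⟩,
            by first | exact hi | exact hi.symm⟩
      · rw [Sym2.eq_iff] at he
        rcases he with ⟨rfl, rfl⟩ | ⟨rfl, rfl⟩
        · exact ⟨⟨by simp [ch, lf], Or.inl (Or.inr ⟨x.1, x.2, rfl, rfl⟩)⟩,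
            by first | exact hx | exact hx.symm⟩
        · exact ⟨⟨by simp [ch, lf], Or.inr (Or.inr ⟨x.1, x.2, rfl, rfl⟩)⟩,
            by first | exact hx | exact hx.symm⟩

lemma negCount_eq (f : Vt n ≃ Fin (Fintype.card (Vt n))) :
    negCount (perfTree n) f
      = (n - #(univ.filter fun i : Fin n => pb f (ch i) = pb f (rt n)))
        + ∑ i : Fin n, #(univ.filter fun j : Fin (n-1) => pb f (lf i j) ≠ pb f (ch i)) := by
  have hdisj : Disjoint (F1 f) (F2 f) := by
    rw [Finset.disjoint_left]
    intro e he1 he2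
    simp only [F1, F2, Finset.mem_image, mem_filter, mem_univ, true_and] at he1 he2
    obtain ⟨i, -, rfl⟩ := he1
    obtain ⟨x, -, hx⟩ := he2
    rw [Sym2.eq_iff] at hx
    simp [rt, ch, lf] at hx
  have hinj1 : Function.Injective (fun i : Fin n => s(rt n, ch i)) := by
    intro a b h
    simp only [Sym2.eq_iff, rt, ch] at h
    simpa using h
  have hinj2 : Function.Injective
      (fun x : Fin n × Fin (n-1) => s(ch x.1, lf x.1 x.2)) := by
    rintro ⟨a1, a2⟩ ⟨b1, b2⟩ h
    simp only [Sym2.eq_iff, ch, lf] at h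
    simp only [Sum.inr.injEq, Sum.inl.injEq, Prod.mk.injEq] at h
    rcases h with ⟨h1, h2⟩ | ⟨h1, h2⟩
    · simp_all
    · simp_all
  rw [negCount, negSet_eq, Set.ncard_coe_finset, Finset.card_union_of_disjoint hdisj]
  congr 1
  · rw [F1, Finset.card_image_of_injective _ hinj1]
    have h2 := Finset.card_filter_add_card_filter_not
      (s := (univ : Finset (Fin n))) (p := fun i => pb f (ch i) = pb f (rt n))
    have h3 : (univ.filter fun i : Fin n => pb f (ch i) ≠ pb f (rt n))
        = (univ.filter fun i : Fin n => ¬ (pb f (ch i) = pb f (rt n))) := by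
      ext i; simp
    rw [Finset.card_univ, Fintype.card_fin] at h2
    rw [h3]
    omega
  · rw [F2, Finset.card_image_of_injective _ hinj2, card_filter_prod]

lemma filter_decomp (q : Vt n → Prop) [DecidablePred q] (hq : q (rt n)) :
    #(univ.filter q)
      = 1 + #(univ.filter fun i : Fin n => q (ch i))
        + ∑ i : Fin n, #(univ.filter fun j : Fin (n-1) => q (lf i j)) := by
  rw [card_filter_sum (q := q),
    card_filter_sum (q := fun b : Fin n ⊕ Fin n × Fin (n-1) => q (Sum.inr b)),
    card_filter_prod (q := fun x : Fin n × Fin (n-1) => q (Sum.inr (Sum.inr x)))]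
  have h1 : #(univ.filter fun u : Unit => q (Sum.inl u)) = 1 := by
    rw [Finset.filter_true_of_mem (fun u _ => hq)]
    simp
  rw [h1, add_assoc]

lemma card_pb {M : ℕ} (f : Vt n ≃ Fin (Fintype.card (Vt n)))
    (hcard : Fintype.card (Vt n) = 2 * M) :
    #(univ.filter fun v => pb f v = pb f (rt n)) = M := by
  have base := card_even_parity M (f.trans (finCongr hcard))
  have hpb : ∀ v, pb f v = true ↔ ((f.trans (finCongr hcard)) v).val % 2 = 0 := by
    intro v; simp [pb, finCongr_apply]
  have hM : #(univ.filter fun v => pb f v = true) = M := by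
    rw [show (univ.filter fun v : Vt n => pb f v = true)
        = (univ.filter fun v => ((f.trans (finCongr hcard)) v).val % 2 = 0) from by
      ext v; simp only [mem_filter, mem_univ, true_and]; exact hpb v]
    exact base
  cases hrt : pb f (rt n)
  · have htot := Finset.card_filter_add_card_filter_not
      (s := (univ : Finset (Vt n))) (p := fun v => pb f v = true)
    have hcu : #(univ : Finset (Vt n)) = 2 * M := by rw [Finset.card_univ, hcard]
    have hneg : (univ.filter fun v : Vt n => ¬ pb f v = true)
        = (univ.filter fun v => pb f v = false) := by
      ext v; simp only [mem_filter, mem_univ, true_and, Bool.not_eq_true]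
    rw [hneg] at htot
    have hgoal : #(univ.filter fun v : Vt n => pb f v = pb f (rt n))
        = #(univ.filter fun v => pb f v = false) := by
      simp only [hrt]
    omega
  · exact hM

lemma bb_eq (f : Vt n ≃ Fin (Fintype.card (Vt n))) (i : Fin n) :
    #(univ.filter fun j : Fin (n-1) => pb f (lf i j) ≠ pb f (ch i))
      = if pb f (ch i) = pb f (rt n)
        then (n-1) - #(univ.filter fun j : Fin (n-1) => pb f (lf i j) = pb f (rt n))
        else #(univ.filter fun j : Fin (n-1) => pb f (lf i j) = pb f (rt n)) := by
  by_cases h : pb f (ch i) = pb f (rt n)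
  · rw [if_pos h]
    have h1 : (univ.filter fun j : Fin (n-1) => pb f (lf i j) ≠ pb f (ch i))
        = (univ.filter fun j : Fin (n-1) => ¬ (pb f (lf i j) = pb f (rt n))) := by
      ext j; simp [h]
    have h2 := Finset.card_filter_add_card_filter_not
      (s := (univ : Finset (Fin (n-1)))) (p := fun j => pb f (lf i j) = pb f (rt n))
    rw [Finset.card_univ, Fintype.card_fin] at h2
    rw [h1]
    omega
  · rw [if_neg h]
    have h1 : (univ.filter fun j : Fin (n-1) => pb f (lf i j) ≠ pb f (ch i))
        = (univ.filter fun j : Fin (n-1) => pb f (lf i j) = pb f (rt n)) := by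
      ext j
      simp only [mem_filter, mem_univ, true_and]
      revert h
      cases pb f (ch i) <;> cases pb f (rt n) <;> cases pb f (lf i j) <;> simp
    rw [h1]

/- ------------- arithmetic ------------- -/

lemma arith (m K A T : ℕ) (hm : 1 ≤ m) (hK : K ≤ 2*m+1)
    (h1 : (T : ℤ) ≥ 2*m*K - A) (h2 : (T : ℤ) ≥ A - 2*m*K)
    (hsum : 1 + K + A = 2*m^2 + 2*m + 1) :
    2*m+1 ≤ (2*m+1 - K) + T := by
  have hA : (A : ℤ) = 2*m^2 + 2*m - K := by
    have : (1 + K + A : ℤ) = 2*m^2 + 2*m + 1 := by exact_mod_cast hsum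
    linarith
  have hcast : ((2*m+1 - K : ℕ) : ℤ) = 2*m+1 - K := by
    have := hK; push_cast [Nat.cast_sub hK]; ring
  rcases le_or_gt K m with hKm | hKm
  · -- use h2
    have : (2*m+1 : ℤ) ≤ ((2*m+1 - K : ℕ) : ℤ) + T := by
      rw [hcast]
      have hfac : (0 : ℤ) ≤ 2 * ((m : ℤ) - K) * (m + 1) := by
        have : (K : ℤ) ≤ m := by exact_mod_cast hKm
        nlinarith
      nlinarith [h2, hA]
    exact_mod_cast this
  · -- use h1
    have : (2*m+1 : ℤ) ≤ ((2*m+1 - K : ℕ) : ℤ) + T := by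
      rw [hcast]
      have hKm' : (m : ℤ) + 1 ≤ K := by exact_mod_cast hKm
      nlinarith [h1, hA]
    exact_mod_cast this


lemma exists_parity_equiv {W : Type*} [Fintype W] [DecidableEq W] (M : ℕ)
    (hcard : Fintype.card W = 2*M) (A : Finset W) (hA : #A = M) :
    ∃ f : W ≃ Fin (Fintype.card W), ∀ v, ((f v).val % 2 = 0 ↔ v ∈ A) := by
  have h1 : Fintype.card {x // x ∈ A} = M := by rw [Fintype.card_coe, hA]
  have h2 : Fintype.card {x : W // ¬ x ∈ A} = M := by
    rw [Fintype.card_subtype_compl, hcard, Fintype.card_coe, hA]; omega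
  let e1 := Fintype.equivFinOfCardEq h1
  let e2 := Fintype.equivFinOfCardEq h2
  refine ⟨(Equiv.sumCompl (· ∈ A)).symm.trans ((e1.sumCongr e2).trans
      ((parityEquiv M).trans (finCongr hcard.symm))), fun v => ?_⟩
  have hval : (((Equiv.sumCompl (· ∈ A)).symm.trans ((e1.sumCongr e2).trans
      ((parityEquiv M).trans (finCongr hcard.symm)))) v).val
      = ((parityEquiv M) ((e1.sumCongr e2) ((Equiv.sumCompl (· ∈ A)).symm v))).val := by
    simp [finCongr_apply]
  rw [hval, parityEquiv_parity]
  by_cases hv : v ∈ A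
  · rw [Equiv.sumCompl_symm_apply_of_pos hv]
    simp [hv]
  · rw [Equiv.sumCompl_symm_apply_of_neg hv]
    simp [hv]

def patB (m : ℕ) : Vt (2*m+1) → Bool
  | Sum.inl _ => true
  | Sum.inr (Sum.inl i) => decide (i.val < m+1)
  | Sum.inr (Sum.inr x) => decide (x.1.val < m) || (decide (x.1.val = m) && decide (x.2.val < m-1))

lemma patB_card (m : ℕ) (hm : 1 ≤ m) :
    #(univ.filter fun v => patB m v = true) = 2*m^2 + 2*m + 1 := by
  obtain ⟨m', rfl⟩ : ∃ m', m = m'+1 := ⟨m-1, by omega⟩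
  set m := m' + 1 with hmdef
  rw [filter_decomp (fun v => patB m v = true) rfl]
  have hch : #(univ.filter fun i : Fin (2*m+1) => patB m (ch i) = true) = m+1 := by
    have h : (univ.filter fun i : Fin (2*m+1) => patB m (ch i) = true)
        = (univ.filter fun i : Fin (2*m+1) => i.val < m+1) := by
      ext i; simp [patB]
    rw [h, card_filter_val_lt _ _ (by omega)]
  have hlf : ∀ i : Fin (2*m+1),
      #(univ.filter fun j : Fin (2*m+1-1) => patB m (lf i j) = true)
        = (if i.val < m then 2*m+1-1 else if i.val = m then m-1 else 0) := by
    intro i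
    by_cases h1 : i.val < m
    · rw [if_pos h1, Finset.filter_true_of_mem (fun j _ => by simp [patB, h1]),
        Finset.card_univ, Fintype.card_fin]
    · rw [if_neg h1]
      by_cases h2 : i.val = m
      · rw [if_pos h2]
        have h : (univ.filter fun j : Fin (2*m+1-1) => patB m (lf i j) = true)
            = (univ.filter fun j : Fin (2*m+1-1) => j.val < m-1) := by
          ext j; simp [patB, h1, h2]
        rw [h, card_filter_val_lt _ _ (by omega)]
      · rw [if_neg h2, Finset.filter_false_of_mem (fun j _ => by simp [patB, h1, h2]),
          Finset.card_empty]
  rw [hch, Finset.sum_congr rfl (fun i _ => hlf i),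
    Fin.sum_univ_eq_sum_range (fun t => if t < m then 2*m+1-1 else if t = m then m-1 else 0)
      (2*m+1),
    Finset.range_eq_Ico, ← Finset.sum_Ico_consecutive _ (Nat.zero_le m) (by omega : m ≤ 2*m+1),
    Finset.sum_eq_sum_Ico_succ_bot (by omega : m < 2*m+1)]
  have hA : (∑ t ∈ Finset.Ico 0 m,
      if t < m then 2*m+1-1 else if t = m then m-1 else 0) = m * (2*m) := by
    rw [Finset.sum_congr rfl (fun t ht => by
      rw [if_pos (Finset.mem_Ico.mp ht).2]), Finset.sum_const, Nat.card_Ico]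
    rw [Nat.sub_zero, smul_eq_mul, show 2*m+1-1 = 2*m from by omega]
  have hB : (∑ t ∈ Finset.Ico (m+1) (2*m+1),
      if t < m then 2*m+1-1 else if t = m then m-1 else 0) = 0 := by
    apply Finset.sum_eq_zero
    intro t ht
    rw [Finset.mem_Ico] at ht
    rw [if_neg (by omega), if_neg (by omega)]
  rw [hA, hB, if_neg (by omega), if_pos rfl]
  simp only [hmdef]
  ring_nf
  omega


lemma lower (m : ℕ) (hm : 1 ≤ m)
    (hcard : Fintype.card (Vt (2*m+1)) = 2 * (2*m^2 + 2*m + 1))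
    (f : Vt (2*m+1) ≃ Fin (Fintype.card (Vt (2*m+1)))) :
    2*m+1 ≤ negCount (perfTree (2*m+1)) f := by
  have hconstraint : 1 + #(univ.filter fun i : Fin (2*m+1) => pb f (ch i) = pb f (rt (2*m+1)))
      + ∑ i : Fin (2*m+1),
        #(univ.filter fun j : Fin (2*m+1-1) => pb f (lf i j) = pb f (rt (2*m+1)))
      = 2*m^2 + 2*m + 1 := by
    have hd := filter_decomp (n := 2*m+1) (fun v => pb f v = pb f (rt (2*m+1))) rfl
    rw [card_pb f hcard] at hd
    exact hd.symm
  have hK : #(univ.filter fun i : Fin (2*m+1) => pb f (ch i) = pb f (rt (2*m+1))) ≤ 2*m+1 := by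
    refine le_trans (Finset.card_filter_le _ _) ?_
    rw [Finset.card_univ, Fintype.card_fin]
  have hsumif : (∑ i : Fin (2*m+1),
      (if pb f (ch i) = pb f (rt (2*m+1)) then (2*m : ℤ) else 0))
      = 2*m*(#(univ.filter fun i : Fin (2*m+1) => pb f (ch i) = pb f (rt (2*m+1)))) := by
    rw [← Finset.sum_filter, Finset.sum_const, nsmul_eq_mul]
    ring
  have hpt1 : ∀ i : Fin (2*m+1),
      (if pb f (ch i) = pb f (rt (2*m+1)) then (2*m:ℤ) else 0)
        - (#(univ.filter fun j : Fin (2*m+1-1) => pb f (lf i j) = pb f (rt (2*m+1))) : ℤ)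
      ≤ (#(univ.filter fun j : Fin (2*m+1-1) => pb f (lf i j) ≠ pb f (ch i)) : ℤ) := by
    intro i
    rw [bb_eq f i]
    by_cases hc : pb f (ch i) = pb f (rt (2*m+1))
    · rw [if_pos hc, if_pos hc]; omega
    · rw [if_neg hc, if_neg hc]; omega
  have hpt2 : ∀ i : Fin (2*m+1),
      (#(univ.filter fun j : Fin (2*m+1-1) => pb f (lf i j) = pb f (rt (2*m+1))) : ℤ)
        - (if pb f (ch i) = pb f (rt (2*m+1)) then (2*m:ℤ) else 0)
      ≤ (#(univ.filter fun j : Fin (2*m+1-1) => pb f (lf i j) ≠ pb f (ch i)) : ℤ) := by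
    intro i
    rw [bb_eq f i]
    have hb : #(univ.filter fun j : Fin (2*m+1-1) => pb f (lf i j) = pb f (rt (2*m+1)))
        ≤ 2*m+1-1 := by
      refine le_trans (Finset.card_filter_le _ _) ?_
      rw [Finset.card_univ, Fintype.card_fin]
    by_cases hc : pb f (ch i) = pb f (rt (2*m+1))
    · rw [if_pos hc, if_pos hc]; omega
    · rw [if_neg hc, if_neg hc]; omega
  have h1 : ((∑ i : Fin (2*m+1),
      #(univ.filter fun j : Fin (2*m+1-1) => pb f (lf i j) ≠ pb f (ch i)) : ℕ) : ℤ)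
      ≥ 2*m*(#(univ.filter fun i : Fin (2*m+1) => pb f (ch i) = pb f (rt (2*m+1))))
        - ((∑ i : Fin (2*m+1),
          #(univ.filter fun j : Fin (2*m+1-1) => pb f (lf i j) = pb f (rt (2*m+1))) : ℕ)) := by
    push_cast
    rw [← hsumif, ← Finset.sum_sub_distrib]
    exact Finset.sum_le_sum (fun i _ => hpt1 i)
  have h2 : ((∑ i : Fin (2*m+1),
      #(univ.filter fun j : Fin (2*m+1-1) => pb f (lf i j) ≠ pb f (ch i)) : ℕ) : ℤ)
      ≥ ((∑ i : Fin (2*m+1),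
          #(univ.filter fun j : Fin (2*m+1-1) => pb f (lf i j) = pb f (rt (2*m+1))) : ℕ))
        - 2*m*(#(univ.filter fun i : Fin (2*m+1) => pb f (ch i) = pb f (rt (2*m+1)))) := by
    push_cast
    rw [← hsumif, ← Finset.sum_sub_distrib]
    exact Finset.sum_le_sum (fun i _ => hpt2 i)
  rw [negCount_eq]
  exact arith m _ _ _ hm hK h1 h2 hconstraint

lemma upper (m : ℕ) (hm : 1 ≤ m)
    (hcard : Fintype.card (Vt (2*m+1)) = 2 * (2*m^2 + 2*m + 1)) :
    ∃ f : Vt (2*m+1) ≃ Fin (Fintype.card (Vt (2*m+1))),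
      negCount (perfTree (2*m+1)) f = 2*m+1 := by
  obtain ⟨f, hf⟩ := exists_parity_equiv (2*m^2+2*m+1) hcard
    (univ.filter fun v => patB m v = true) (patB_card m hm)
  have hpb : ∀ v, pb f v = patB m v := by
    intro v
    have h := hf v
    simp only [mem_filter, mem_univ, true_and] at h
    rw [show (pb f v = patB m v) ↔ ((pb f v = true) ↔ (patB m v = true)) from by
      cases pb f v <;> cases patB m v <;> simp]
    simp only [pb, beq_iff_eq]
    exact h
  refine ⟨f, ?_⟩
  rw [negCount_eq]
  have hK : #(univ.filter fun i : Fin (2*m+1) => pb f (ch i) = pb f (rt (2*m+1))) = m+1 := by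
    have h : (univ.filter fun i : Fin (2*m+1) => pb f (ch i) = pb f (rt (2*m+1)))
        = (univ.filter fun i : Fin (2*m+1) => i.val < m+1) := by
      ext i
      simp [hpb, patB]
    rw [h, card_filter_val_lt _ _ (by omega)]
  have hlf : ∀ i : Fin (2*m+1),
      #(univ.filter fun j : Fin (2*m+1-1) => pb f (lf i j) ≠ pb f (ch i))
      = if (⟨m, by omega⟩ : Fin (2*m+1)) = i then m+1 else 0 := by
    intro i
    by_cases h2 : i.val = m
    · rw [if_pos (Fin.ext h2.symm)]
      have h : (univ.filter fun j : Fin (2*m+1-1) => pb f (lf i j) ≠ pb f (ch i))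
          = (univ.filter fun j : Fin (2*m+1-1) => ¬ (j.val < m-1)) := by
        ext j
        have h1 : ¬ i.val < m := by omega
        have h3 : i.val < m+1 := by omega
        simp [hpb, patB, h1, h2, h3]
      have hpos := card_filter_val_lt (2*m+1-1) (m-1) (by omega)
      have htot := Finset.card_filter_add_card_filter_not
        (s := (univ : Finset (Fin (2*m+1-1)))) (p := fun j => j.val < m-1)
      rw [Finset.card_univ, Fintype.card_fin] at htot
      rw [h]
      omega
    · rw [if_neg (by intro hh; exact h2 (by rw [← hh]))]
      rw [Finset.filter_false_of_mem, Finset.card_empty]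
      intro j _
      by_cases h1 : i.val < m
      · have h3 : i.val < m+1 := by omega
        simp [hpb, patB, h1, h3]
      · have h3 : ¬ i.val < m+1 := by omega
        simp [hpb, patB, h1, h2, h3]
  rw [hK, Finset.sum_congr rfl (fun i _ => hlf i),
    Finset.sum_ite_eq univ (⟨m, by omega⟩ : Fin (2*m+1)) (fun _ => m+1)]
  simp only [mem_univ, if_true]
  omega

end RnaAux

/-- For odd n > 2, the perfect n-ary tree of depth 2 has rna number n,
which exceeds ⌈Δ/2⌉ = ⌈n/2⌉. -/
theorem rna_perfTree_odd (n : ℕ) (hn : 2 < n) (hodd : Odd n) :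
    rna (perfTree n) = n ∧ rna (perfTree n) > (n + 1) / 2 := by
  obtain ⟨m, rfl⟩ := hodd
  have hm : 1 ≤ m := by omega
  have hcard : Fintype.card (RnaAux.Vt (2*m+1)) = 2 * (2*m^2+2*m+1) := by
    simp only [RnaAux.Vt, Fintype.card_sum, Fintype.card_prod, Fintype.card_fin,
      Fintype.card_unit]
    rw [show 2*m+1-1 = 2*m from by omega]
    ring
  obtain ⟨f0, hf0⟩ := RnaAux.upper m hm hcard
  have hmain : rna (perfTree (2*m+1)) = 2*m+1 := by
    apply le_antisymm
    · exact Nat.sInf_le ⟨f0, hf0⟩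
    · refine le_csInf ⟨negCount (perfTree (2*m+1)) f0, ⟨f0, rfl⟩⟩ ?_
      rintro x ⟨g, rfl⟩
      exact RnaAux.lower m hm hcard g
  exact ⟨hmain, by rw [hmain]; omega⟩
end

section
/- Let T be the tree consisting of a center vertex u₀ of degree n joined to n vertices u₁,...,uₙ, each uᵢ additionally joined to n−1 leaves, where n = 2m > 2 is even. Then σ⁻(T) = n/2. -/
open SimpleGraph

variable {V : Type*}

lemma card_odd_range : ∀ N : ℕ, ((Finset.range N).filter (fun x => x % 2 = 1)).card = N / 2 := by
  intro N
  induction N with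
  | zero => simp
  | succ k ih =>
    rw [Finset.range_add_one, Finset.filter_insert]
    split_ifs with h
    · rw [Finset.card_insert_of_notMem (by simp)]; omega
    · omega

lemma card_even_range : ∀ N : ℕ, ((Finset.range N).filter (fun x => x % 2 = 0)).card = (N + 1) / 2 := by
  intro N
  induction N with
  | zero => simp
  | succ k ih =>
    rw [Finset.range_add_one, Finset.filter_insert]
    split_ifs with h
    · rw [Finset.card_insert_of_notMem (by simp)]; omega
    · omega

lemma card_filter_equiv {V : Type*} [Fintype V] [DecidableEq V]
    (f : V ≃ Fin (Fintype.card V)) (P : ℕ → Prop) [DecidablePred P] :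
    (Finset.univ.filter (fun v => P (f v : ℕ))).card
      = ((Finset.range (Fintype.card V)).filter P).card := by
  have himg : ((Finset.univ.filter (fun v => P (f v : ℕ))).image (fun v => (f v : ℕ)))
      = (Finset.range (Fintype.card V)).filter P := by
    ext x
    simp only [Finset.mem_image, Finset.mem_filter, Finset.mem_univ, true_and, Finset.mem_range]
    constructor
    · rintro ⟨v, hv, rfl⟩; exact ⟨(f v).isLt, hv⟩
    · rintro ⟨hx, hP⟩
      exact ⟨f.symm ⟨x, hx⟩, by simpa using hP, by simp⟩
  rw [← himg, Finset.card_image_of_injective]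
  exact fun a b h => f.injective (Fin.val_injective h)

lemma lower_bound (n m : ℕ) (hn : 2 < n) (hm : n = m + m)
    (f : (Unit ⊕ (Fin n ⊕ Fin n × Fin (n - 1))) ≃ Fin (Fintype.card (Unit ⊕ (Fin n ⊕ Fin n × Fin (n - 1))))) :
    m ≤ negCount (perfTree n) f := by
  classical
  have hm1 : 1 ≤ m := by omega
  have hcard : Fintype.card (Unit ⊕ (Fin n ⊕ Fin n × Fin (n - 1))) = n * n + 1 := by
    have h1 : n * (n - 1) = n * n - n := by rw [Nat.mul_sub, Nat.mul_one]
    have h2 : n ≤ n * n := Nat.le_mul_of_pos_left n (by omega)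
    simp only [Fintype.card_sum, Fintype.card_unit, Fintype.card_fin, Fintype.card_prod]
    omega
  have hnn : n * n = 2 * (m * m + m * m) := by rw [hm]; ring
  set u₀ : Unit ⊕ (Fin n ⊕ Fin n × Fin (n - 1)) := Sum.inl () with hu₀
  set A : Finset (Unit ⊕ (Fin n ⊕ Fin n × Fin (n - 1))) :=
    Finset.univ.filter (fun v => ¬ ((f v : ℕ) % 2 = (f u₀ : ℕ) % 2)) with hA
  -- |A| ≥ 2 m²
  have hAcard : m * m + m * m ≤ A.card := by
    rw [hA, card_filter_equiv f (fun x => ¬ (x % 2 = (f u₀ : ℕ) % 2))]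
    have hp : (f u₀ : ℕ) % 2 = 0 ∨ (f u₀ : ℕ) % 2 = 1 := by omega
    rcases hp with hp | hp <;> rw [hp]
    · have : ((Finset.range (Fintype.card (Unit ⊕ (Fin n ⊕ Fin n × Fin (n - 1))))).filter
          (fun x => ¬ (x % 2 = 0))).card
          = ((Finset.range (Fintype.card (Unit ⊕ (Fin n ⊕ Fin n × Fin (n - 1))))).filter
          (fun x => x % 2 = 1)).card := by
        apply Finset.card_bij (fun x _ => x) <;> simp +contextual [Nat.mod_two_ne_zero]
      rw [this, card_odd_range, hcard]
      omega
    · have : ((Finset.range (Fintype.card (Unit ⊕ (Fin n ⊕ Fin n × Fin (n - 1))))).filter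
          (fun x => ¬ (x % 2 = 1))).card
          = ((Finset.range (Fintype.card (Unit ⊕ (Fin n ⊕ Fin n × Fin (n - 1))))).filter
          (fun x => x % 2 = 0)).card := by
        apply Finset.card_bij (fun x _ => x) <;> simp +contextual [Nat.mod_two_ne_one]
      rw [this, card_even_range, hcard]
      omega
  have hu₀A : u₀ ∉ A := by simp [hA]
  -- the map from A to crossing edges
  set e : (Unit ⊕ (Fin n ⊕ Fin n × Fin (n - 1))) → Sym2 (Unit ⊕ (Fin n ⊕ Fin n × Fin (n - 1))) :=
    Sum.elim (fun _ => s(u₀, u₀))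
      (Sum.elim (fun i => s(u₀, Sum.inr (Sum.inl i)))
        (fun x => if Sum.inr (Sum.inl x.1) ∈ A then s(u₀, Sum.inr (Sum.inl x.1))
          else s(Sum.inr (Sum.inl x.1), Sum.inr (Sum.inr x)))) with he
  -- adjacency facts
  have hadj1 : ∀ i : Fin n, (perfTree n).Adj u₀ (Sum.inr (Sum.inl i)) := by
    intro i
    rw [perfTree, SimpleGraph.fromRel_adj]
    exact ⟨by simp [hu₀], Or.inl (Or.inl ⟨i, rfl, rfl⟩)⟩
  have hadj2 : ∀ (i : Fin n) (j : Fin (n - 1)),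
      (perfTree n).Adj (Sum.inr (Sum.inl i)) (Sum.inr (Sum.inr (i, j))) := by
    intro i j
    rw [perfTree, SimpleGraph.fromRel_adj]
    exact ⟨by simp, Or.inl (Or.inr ⟨i, j, rfl, rfl⟩)⟩
  have hmemA : ∀ v, v ∈ A ↔ ¬ ((f v : ℕ) % 2 = (f u₀ : ℕ) % 2) := by
    intro v; simp [hA]
  -- e maps A into negSet
  have hmaps : ∀ v ∈ A, e v ∈ negSet (perfTree n) f := by
    intro v hv
    match v with
    | Sum.inl _ => exact absurd rfl ((hmemA _).1 hv)
    | Sum.inr (Sum.inl i) =>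
        simp only [he, Sum.elim_inr, Sum.elim_inl]
        refine ⟨(SimpleGraph.mem_edgeSet _).2 (hadj1 i), ?_⟩
        simp only [Sym2.lift_mk]
        exact fun h => (hmemA _).1 hv h.symm
    | Sum.inr (Sum.inr (i, j)) =>
        simp only [he, Sum.elim_inr]
        split_ifs with hi
        · refine ⟨(SimpleGraph.mem_edgeSet _).2 (hadj1 i), ?_⟩
          simp only [Sym2.lift_mk]
          exact fun h => (hmemA _).1 hi h.symm
        · refine ⟨(SimpleGraph.mem_edgeSet _).2 (hadj2 i j), ?_⟩
          simp only [Sym2.lift_mk]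
          intro h
          have hieq : (f (Sum.inr (Sum.inl i)) : ℕ) % 2 = (f u₀ : ℕ) % 2 := by
            by_contra hc
            exact hi ((hmemA _).2 hc)
          exact (hmemA _).1 hv (h.symm.trans hieq)
  -- rewriting lemmas for e
  have hev1 : ∀ i : Fin n, e (Sum.inr (Sum.inl i)) = s(u₀, Sum.inr (Sum.inl i)) := fun i => rfl
  -- the branch finset
  have hBcard : ∀ i : Fin n,
      (insert (Sum.inr (Sum.inl i) : Unit ⊕ (Fin n ⊕ Fin n × Fin (n - 1)))
        ((Finset.univ : Finset (Fin (n - 1))).image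
          (fun j => (Sum.inr (Sum.inr (i, j)) : Unit ⊕ (Fin n ⊕ Fin n × Fin (n - 1)))))).card ≤ n := by
    intro i
    have h1 := Finset.card_insert_le (Sum.inr (Sum.inl i) : Unit ⊕ (Fin n ⊕ Fin n × Fin (n - 1)))
      ((Finset.univ : Finset (Fin (n - 1))).image (fun j => Sum.inr (Sum.inr (i, j))))
    have h2 := Finset.card_image_le (s := (Finset.univ : Finset (Fin (n - 1))))
      (f := fun j => (Sum.inr (Sum.inr (i, j)) : Unit ⊕ (Fin n ⊕ Fin n × Fin (n - 1))))
    simp only [Finset.card_univ, Fintype.card_fin] at h2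
    omega
  have hfibB : ∀ i : Fin n, (A.filter (fun a => e a = s(u₀, Sum.inr (Sum.inl i)))).card ≤ n := by
    intro i
    refine le_trans (Finset.card_le_card ?_) (hBcard i)
    intro w hw
    rw [Finset.mem_filter] at hw
    obtain ⟨hwA, hwe⟩ := hw
    match w with
    | Sum.inl _ =>
        simp only [he, Sum.elim_inl, hu₀, Sym2.eq_iff, reduceCtorEq, and_false, false_and,
          or_self] at hwe
    | Sum.inr (Sum.inl k) =>
        simp only [he, Sum.elim_inr, Sum.elim_inl, hu₀, Sym2.eq_iff, reduceCtorEq, and_false,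
          false_and, or_false, true_and, Sum.inr.injEq, Sum.inl.injEq] at hwe
        subst hwe
        exact Finset.mem_insert_self _ _
    | Sum.inr (Sum.inr (k, l)) =>
        simp only [he, Sum.elim_inr] at hwe
        split_ifs at hwe with hk
        · simp only [hu₀, Sym2.eq_iff, reduceCtorEq, and_false, false_and, or_false, true_and,
            Sum.inr.injEq, Sum.inl.injEq] at hwe
          subst hwe
          exact Finset.mem_insert_of_mem (Finset.mem_image_of_mem _ (Finset.mem_univ l))
        · simp only [hu₀, Sym2.eq_iff, reduceCtorEq, and_false, false_and, or_self] at hwe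
  have hfib : ∀ b ∈ A.image e, (A.filter (fun a => e a = b)).card ≤ n := by
    intro b hb
    rw [Finset.mem_image] at hb
    obtain ⟨v, hv, rfl⟩ := hb
    match v with
    | Sum.inl _ => exact absurd rfl ((hmemA _).1 hv)
    | Sum.inr (Sum.inl i) =>
        rw [hev1 i]
        exact hfibB i
    | Sum.inr (Sum.inr (i, j)) =>
        by_cases hk : Sum.inr (Sum.inl i) ∈ A
        · have hev : e (Sum.inr (Sum.inr (i, j))) = s(u₀, Sum.inr (Sum.inl i)) := by
            simp [he, hk]
          rw [hev]
          exact hfibB i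
        · have hev : e (Sum.inr (Sum.inr (i, j)))
              = s(Sum.inr (Sum.inl i), Sum.inr (Sum.inr (i, j))) := by
            simp [he, hk]
          rw [hev]
          have hsub : A.filter (fun a => e a = s(Sum.inr (Sum.inl i), Sum.inr (Sum.inr (i, j))))
              ⊆ {Sum.inr (Sum.inr (i, j))} := by
            intro w hw
            rw [Finset.mem_filter] at hw
            obtain ⟨hwA, hwe⟩ := hw
            match w with
            | Sum.inl _ =>
                simp only [he, Sum.elim_inl, hu₀, Sym2.eq_iff, reduceCtorEq, and_false,
                  false_and, or_self] at hwe
            | Sum.inr (Sum.inl k) =>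
                simp only [he, Sum.elim_inr, Sum.elim_inl, hu₀, Sym2.eq_iff, reduceCtorEq,
                  and_false, false_and, or_self, and_self, Sum.inr.injEq, Sum.inl.injEq] at hwe
            | Sum.inr (Sum.inr (k, l)) =>
                simp only [he, Sum.elim_inr] at hwe
                split_ifs at hwe with hk2
                · simp only [hu₀, Sym2.eq_iff, reduceCtorEq, and_false, false_and, or_self,
                    and_self, Sum.inr.injEq, Sum.inl.injEq] at hwe
                · simp only [Sym2.eq_iff, reduceCtorEq, and_false, false_and, or_false,
                    Sum.inr.injEq, Sum.inl.injEq, Prod.mk.injEq] at hwe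
                  obtain ⟨hki, hkl⟩ := hwe
                  simp [hkl]
          refine le_trans (Finset.card_le_card hsub) (by simp; omega)
  -- conclude
  have h1 : A.card ≤ n * (A.image e).card := Finset.card_le_mul_card_image A n hfib
  have hFfin : (negSet (perfTree n) f).Finite := Set.toFinite _
  have h2 : (A.image e) ⊆ hFfin.toFinset := by
    intro b hb
    rw [Finset.mem_image] at hb
    obtain ⟨v, hv, rfl⟩ := hb
    rw [Set.Finite.mem_toFinset]
    exact hmaps v hv
  have h3 : (A.image e).card ≤ negCount (perfTree n) f := by
    rw [negCount, Set.ncard_eq_toFinset_card _ hFfin]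
    exact Finset.card_le_card h2
  by_contra hcon
  push_neg at hcon
  have hXm : (A.image e).card < m := lt_of_le_of_lt h3 hcon
  have h1' : A.card ≤ (m + m) * (A.image e).card := by rw [← hm]; exact h1
  nlinarith [h1', hAcard, hXm, hm1]

lemma key_inj {nn a b c d : ℕ} (hc : c < nn) (hd : d < nn)
    (h : a * nn + c = b * nn + d) : a = b ∧ c = d := by
  rcases lt_trichotomy a b with h' | h' | h'
  · exfalso
    have hb : a + 1 ≤ b := h'
    nlinarith
  · subst h'
    exact ⟨rfl, Nat.add_left_cancel h⟩
  · exfalso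
    have hb : b + 1 ≤ a := h'
    nlinarith

lemma upper_bound (n m : ℕ) (hn : 2 < n) (hm : n = m + m) :
    ∃ f : (Unit ⊕ (Fin n ⊕ Fin n × Fin (n - 1)))
        ≃ Fin (Fintype.card (Unit ⊕ (Fin n ⊕ Fin n × Fin (n - 1)))),
      negCount (perfTree n) f ≤ m := by
  classical
  have hm1 : 1 ≤ m := by omega
  have hcard : Fintype.card (Unit ⊕ (Fin n ⊕ Fin n × Fin (n - 1))) = n * n + 1 := by
    have h1 : n * (n - 1) = n * n - n := by rw [Nat.mul_sub, Nat.mul_one]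
    have h2 : n ≤ n * n := Nat.le_mul_of_pos_left n (by omega)
    simp only [Fintype.card_sum, Fintype.card_unit, Fintype.card_fin, Fintype.card_prod]
    omega
  set label : ℕ → ℕ → ℕ :=
    fun i t => if i < m then 2 * (i * n + t) else 2 * ((i - m) * n + t) + 1 with hlabel
  have hnn2 : n * n = m * n + m * n := by rw [hm]; ring
  have label_lt : ∀ i t, i < n → t < n → label i t < n * n := by
    intro i t hi ht
    rw [hlabel]
    simp only
    split_ifs with h
    · have h1 : i * n + n ≤ m * n := by
        have h2 := Nat.mul_le_mul_right n (show i + 1 ≤ m by omega)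
        rw [add_mul, one_mul] at h2
        exact h2
      linarith
    · have h1 : (i - m) * n + n ≤ m * n := by
        have h2 := Nat.mul_le_mul_right n (show (i - m) + 1 ≤ m by omega)
        rw [add_mul, one_mul] at h2
        exact h2
      linarith
  have label_mod : ∀ i t, label i t % 2 = if i < m then 0 else 1 := by
    intro i t
    rw [hlabel]
    simp only
    split_ifs with h
    · exact Nat.mul_mod_right 2 _
    · simp [Nat.mul_add_mod]
  have label_inj : ∀ i₁ t₁ i₂ t₂, i₁ < n → t₁ < n → i₂ < n → t₂ < n →
      label i₁ t₁ = label i₂ t₂ → i₁ = i₂ ∧ t₁ = t₂ := by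
    intro i₁ t₁ i₂ t₂ hi₁ ht₁ hi₂ ht₂ h
    rw [hlabel] at h
    simp only at h
    split_ifs at h with h₁ h₂ h₂
    · have h' := Nat.eq_of_mul_eq_mul_left (by norm_num : 0 < 2) h
      exact key_inj ht₁ ht₂ h'
    · exact absurd h Nat.two_mul_ne_two_mul_add_one
    · exact absurd h.symm Nat.two_mul_ne_two_mul_add_one
    · have h'' := Nat.add_right_cancel h
      have h' := Nat.eq_of_mul_eq_mul_left (by norm_num : 0 < 2) h''
      obtain ⟨hii, htt⟩ := key_inj ht₁ ht₂ h'
      exact ⟨by omega, htt⟩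
  set g : (Unit ⊕ (Fin n ⊕ Fin n × Fin (n - 1))) → ℕ :=
    Sum.elim (fun _ => n * n)
      (Sum.elim (fun i => label i 0) (fun x => label (x.1 : ℕ) ((x.2 : ℕ) + 1))) with hg
  have hglt : ∀ v, g v < n * n + 1 := by
    intro v
    match v with
    | Sum.inl _ => exact Nat.lt_succ_self _
    | Sum.inr (Sum.inl i) =>
        exact Nat.lt_succ_of_lt (label_lt i 0 i.isLt (by omega))
    | Sum.inr (Sum.inr (i, j)) =>
        exact Nat.lt_succ_of_lt (label_lt i ((j : ℕ) + 1) i.isLt (by have := j.isLt; omega))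
  have hginj : Function.Injective g := by
    intro a b hab
    clear_value label
    match a, b with
    | Sum.inl (), Sum.inl () => rfl
    | Sum.inl (), Sum.inr (Sum.inl i) =>
        exact absurd hab.symm (Nat.ne_of_lt (label_lt i 0 i.isLt (by omega)))
    | Sum.inl (), Sum.inr (Sum.inr (i, j)) =>
        exact absurd hab.symm
          (Nat.ne_of_lt (label_lt i ((j : ℕ) + 1) i.isLt (by have := j.isLt; omega)))
    | Sum.inr (Sum.inl i), Sum.inl () =>
        exact absurd hab (Nat.ne_of_lt (label_lt i 0 i.isLt (by omega)))
    | Sum.inr (Sum.inr (i, j)), Sum.inl () =>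
        exact absurd hab
          (Nat.ne_of_lt (label_lt i ((j : ℕ) + 1) i.isLt (by have := j.isLt; omega)))
    | Sum.inr (Sum.inl i), Sum.inr (Sum.inl k) =>
        have h' := (label_inj i 0 k 0 i.isLt (by omega) k.isLt (by omega) hab).1
        have : i = k := Fin.ext h'
        rw [this]
    | Sum.inr (Sum.inl i), Sum.inr (Sum.inr (k, l)) =>
        have h' := (label_inj i 0 k ((l : ℕ) + 1) i.isLt (by omega) k.isLt
          (by have := l.isLt; omega) hab).2
        omega
    | Sum.inr (Sum.inr (i, j)), Sum.inr (Sum.inl k) =>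
        have h' := (label_inj i ((j : ℕ) + 1) k 0 i.isLt (by have := j.isLt; omega) k.isLt
          (by omega) hab).2
        omega
    | Sum.inr (Sum.inr (i, j)), Sum.inr (Sum.inr (k, l)) =>
        obtain ⟨h1, h2⟩ := label_inj i ((j : ℕ) + 1) k ((l : ℕ) + 1) i.isLt
          (by have := j.isLt; omega) k.isLt (by have := l.isLt; omega) hab
        have hik : i = k := Fin.ext h1
        have hjl : j = l := Fin.ext (by omega)
        rw [hik, hjl]
  have hbij : Function.Bijective
      (fun v : (Unit ⊕ (Fin n ⊕ Fin n × Fin (n - 1))) => (⟨g v, hglt v⟩ : Fin (n * n + 1))) := by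
    rw [Fintype.bijective_iff_injective_and_card]
    refine ⟨fun a b hab => hginj (by simpa using congrArg Fin.val hab), ?_⟩
    simp [hcard]
  set f : (Unit ⊕ (Fin n ⊕ Fin n × Fin (n - 1)))
      ≃ Fin (Fintype.card (Unit ⊕ (Fin n ⊕ Fin n × Fin (n - 1)))) :=
    (Equiv.ofBijective _ hbij).trans (finCongr hcard.symm) with hf
  refine ⟨f, ?_⟩
  have hfval : ∀ v, (f v : ℕ) = g v := fun v => rfl
  have hnnm : n * n % 2 = 0 := by
    have h : n * n = 2 * (m * (m + m)) := by rw [hm]; ring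
    rw [h]
    exact Nat.mul_mod_right 2 _
  have hsub : negSet (perfTree n) f ⊆
      (fun i : Fin n =>
          s((Sum.inl () : Unit ⊕ (Fin n ⊕ Fin n × Fin (n - 1))), Sum.inr (Sum.inl i))) ''
        {i : Fin n | m ≤ (i : ℕ)} := by
    intro edge
    induction edge using Sym2.ind with
    | _ a b =>
      rintro ⟨hedge, hpar⟩
      rw [SimpleGraph.mem_edgeSet, perfTree, SimpleGraph.fromRel_adj] at hedge
      obtain ⟨hne, hr⟩ := hedge
      rw [Sym2.lift_mk] at hpar
      rcases hr with (⟨i, rfl, rfl⟩ | ⟨i, j, rfl, rfl⟩) | (⟨i, rfl, rfl⟩ | ⟨i, j, rfl, rfl⟩)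
      · have hi : m ≤ (i : ℕ) := by
          by_contra hic
          apply hpar
          rw [hfval, hfval]
          show n * n % 2 = label (i : ℕ) 0 % 2
          rw [hnnm, label_mod, if_pos (by omega)]
        exact ⟨i, hi, rfl⟩
      · exfalso
        apply hpar
        rw [hfval, hfval]
        show label (i : ℕ) 0 % 2 = label (i : ℕ) ((j : ℕ) + 1) % 2
        rw [label_mod, label_mod]
      · have hi : m ≤ (i : ℕ) := by
          by_contra hic
          apply hpar
          rw [hfval, hfval]
          show label (i : ℕ) 0 % 2 = n * n % 2
          rw [hnnm, label_mod, if_pos (by omega)]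
        exact ⟨i, hi, Sym2.eq_swap⟩
      · exfalso
        apply hpar
        rw [hfval, hfval]
        show label (i : ℕ) ((j : ℕ) + 1) % 2 = label (i : ℕ) 0 % 2
        rw [label_mod, label_mod]
  calc negCount (perfTree n) f
      ≤ ((fun i : Fin n =>
          s((Sum.inl () : Unit ⊕ (Fin n ⊕ Fin n × Fin (n - 1))), Sum.inr (Sum.inl i))) ''
            {i : Fin n | m ≤ (i : ℕ)}).ncard := Set.ncard_le_ncard hsub (Set.toFinite _)
    _ ≤ ({i : Fin n | m ≤ (i : ℕ)}).ncard := Set.ncard_image_le (Set.toFinite _)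
    _ ≤ m := by
        rw [Set.ncard_eq_toFinset_card', Set.toFinset_setOf]
        have hmap : ∀ i ∈ Finset.univ.filter (fun i : Fin n => m ≤ (i : ℕ)),
            (i : ℕ) - m ∈ Finset.range m := by
          intro i hi
          rw [Finset.mem_filter] at hi
          rw [Finset.mem_range]
          have := i.isLt
          omega
        have hinj : Set.InjOn (fun i : Fin n => (i : ℕ) - m)
            (Finset.univ.filter (fun i : Fin n => m ≤ (i : ℕ))) := by
          intro a ha b hb hab
          simp only [Finset.coe_filter, Set.mem_setOf_eq, Finset.mem_univ, true_and] at ha hb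
          have hab' : (a : ℕ) - m = (b : ℕ) - m := hab
          exact Fin.ext (by omega)
        have := Finset.card_le_card_of_injOn (fun i : Fin n => (i : ℕ) - m) hmap hinj
        simpa using this

/-- For even n > 2, the perfect n-ary tree of depth 2 has rna number n/2. -/
theorem rna_perfTree_even (n : ℕ) (hn : 2 < n) (heven : Even n) :
    rna (perfTree n) = n / 2 := by
  obtain ⟨m, hm⟩ := heven
  have hm2 : n / 2 = m := by omega
  obtain ⟨f, hf⟩ := upper_bound n m hn hm
  rw [hm2]
  apply le_antisymm
  · exact le_trans (Nat.sInf_le ⟨f, rfl⟩) hf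
  · refine le_csInf ⟨negCount (perfTree n) f, f, rfl⟩ ?_
    rintro k ⟨f', rfl⟩
    exact lower_bound n m hn hm f'
end

section
/- Let S_m(l) be the spider of order n+1 obtained from a star with center u₀ by making exactly one branch a path of length l ≥ 1 and all other m−1 branches single edges (pendant vertices). Then σ⁻(S_m(l)) = ⌊(n+1)/2⌋ − l + 1 for all 1 ≤ l ≤ ⌊(n+1)/2⌋. -/
open SimpleGraph

variable {V : Type*}

/-- The spider `S_m(l)`: a center `Sum.inl ()` with `m - 1` pendant branches
`Sum.inr (Sum.inl i)` and one branch which is a path of length `l`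
consisting of the vertices `Sum.inr (Sum.inr k)`, `k = 0, ..., l-1`
(the center is adjacent to vertex `0` of the path). -/
def spider (m l : ℕ) : SimpleGraph (Unit ⊕ (Fin (m - 1) ⊕ Fin l)) :=
  SimpleGraph.fromRel (fun a b =>
    (∃ i : Fin (m - 1), a = Sum.inl () ∧ b = Sum.inr (Sum.inl i)) ∨
    (∃ h : 0 < l, a = Sum.inl () ∧ b = Sum.inr (Sum.inr ⟨0, h⟩)) ∨
    (∃ i j : Fin l, (i : ℕ) + 1 = (j : ℕ) ∧
      a = Sum.inr (Sum.inr i) ∧ b = Sum.inr (Sum.inr j)))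

private lemma filter_odd_range_card (N : ℕ) :
    ((Finset.range N).filter (fun x => x % 2 = 1)).card = N / 2 := by
  induction N with
  | zero => simp
  | succ n ih =>
    rw [Finset.range_add_one, Finset.filter_insert]
    by_cases h : n % 2 = 1
    · rw [if_pos h, Finset.card_insert_of_notMem (by simp)]
      omega
    · rw [if_neg h]
      omega

private lemma filter_odd_fin_card (N : ℕ) :
    (Finset.univ.filter (fun x : Fin N => (x : ℕ) % 2 = 1)).card = N / 2 := by
  rw [← filter_odd_range_card N]
  refine Finset.card_bij (fun a _ => (a : ℕ)) ?_ ?_ ?_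
  · intro a ha
    simp only [Finset.mem_filter, Finset.mem_univ, true_and] at ha
    simp [a.isLt, ha]
  · intro a _ b _ h
    exact Fin.val_injective h
  · intro b hb
    simp only [Finset.mem_filter, Finset.mem_range] at hb
    exact ⟨⟨b, hb.1⟩, by simp [hb.2], rfl⟩

private lemma ncard_parity_one {W : Type*} [Fintype W] [DecidableEq W]
    (f : W ≃ Fin (Fintype.card W)) :
    {v : W | (f v : ℕ) % 2 = 1}.ncard = Fintype.card W / 2 := by
  classical
  have h1 : {v : W | (f v : ℕ) % 2 = 1} = ⇑f ⁻¹' {x | (x : ℕ) % 2 = 1} := rfl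
  rw [h1, ← Equiv.image_symm_eq_preimage,
    Set.ncard_image_of_injective _ f.symm.injective,
    Set.ncard_eq_toFinset_card', Set.toFinset_setOf, filter_odd_fin_card]

private lemma ncard_parity_zero {W : Type*} [Fintype W] [DecidableEq W]
    (f : W ≃ Fin (Fintype.card W)) :
    {v : W | (f v : ℕ) % 2 = 0}.ncard = Fintype.card W - Fintype.card W / 2 := by
  classical
  have hc : {v : W | (f v : ℕ) % 2 = 0} = {v : W | (f v : ℕ) % 2 = 1}ᶜ := by
    ext v; simp only [Set.mem_setOf_eq, Set.mem_compl_iff]; omega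
  have h2 := Set.ncard_add_ncard_compl {v : W | (f v : ℕ) % 2 = 1}
  rw [Nat.card_eq_fintype_card] at h2
  have h1 := ncard_parity_one f
  rw [hc]
  omega

private lemma spider_card (m l n : ℕ) (hm : 1 ≤ m) (horder : m + l = n + 1) :
    Fintype.card (Unit ⊕ (Fin (m-1) ⊕ Fin l)) = n + 1 := by
  have : Fintype.card (Unit ⊕ (Fin (m-1) ⊕ Fin l)) = 1 + ((m-1) + l) := by simp
  omega

private lemma spider_lower (m l n : ℕ) (hm : 1 ≤ m) (horder : m + l = n + 1) (hl1 : 1 ≤ l)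
    (f : (Unit ⊕ (Fin (m-1) ⊕ Fin l)) ≃ Fin (Fintype.card (Unit ⊕ (Fin (m-1) ⊕ Fin l)))) :
    (n+1)/2 - l + 1 ≤ negCount (spider m l) f := by
  classical
  have hN := spider_card m l n hm horder
  set c : ℕ := ((f (Sum.inl ()) : ℕ) % 2) with hc
  set BP : Set (Fin (m-1)) := {i | (f (Sum.inr (Sum.inl i)) : ℕ) % 2 ≠ c} with hBP
  set BQ : Set (Fin l) := {j | (f (Sum.inr (Sum.inr j)) : ℕ) % 2 ≠ c} with hBQ
  have hinjP : Function.Injective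
      (fun i : Fin (m-1) => (Sum.inr (Sum.inl i) : Unit ⊕ (Fin (m-1) ⊕ Fin l))) := by
    intro a b h; simpa using h
  have hinjQ : Function.Injective
      (fun j : Fin l => (Sum.inr (Sum.inr j) : Unit ⊕ (Fin (m-1) ⊕ Fin l))) := by
    intro a b h; simpa using h
  have hsplit : {v : Unit ⊕ (Fin (m-1) ⊕ Fin l) | (f v : ℕ) % 2 ≠ c} =
      (fun i : Fin (m-1) => (Sum.inr (Sum.inl i) : Unit ⊕ (Fin (m-1) ⊕ Fin l))) '' BP ∪
      (fun j : Fin l => (Sum.inr (Sum.inr j) : Unit ⊕ (Fin (m-1) ⊕ Fin l))) '' BQ := by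
    ext v
    rcases v with ⟨⟩ | (i | j)
    · simp [hc]
    · simp [hBP]
    · simp [hBQ]
  have hdisj : Disjoint
      ((fun i : Fin (m-1) => (Sum.inr (Sum.inl i) : Unit ⊕ (Fin (m-1) ⊕ Fin l))) '' BP)
      ((fun j : Fin l => (Sum.inr (Sum.inr j) : Unit ⊕ (Fin (m-1) ⊕ Fin l))) '' BQ) := by
    rw [Set.disjoint_left]
    rintro a ⟨i, _, rfl⟩ ⟨j, _, h⟩
    simp at h
  have hBadcard : (n+1)/2 ≤ BP.ncard + BQ.ncard := by
    have h1 : {v : Unit ⊕ (Fin (m-1) ⊕ Fin l) | (f v : ℕ) % 2 ≠ c}.ncard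
        = BP.ncard + BQ.ncard := by
      rw [hsplit, Set.ncard_union_eq hdisj (Set.toFinite _) (Set.toFinite _),
        Set.ncard_image_of_injective _ hinjP, Set.ncard_image_of_injective _ hinjQ]
    have hc01 : c = 0 ∨ c = 1 := by omega
    rcases hc01 with h | h
    · have he : {v : Unit ⊕ (Fin (m-1) ⊕ Fin l) | (f v : ℕ) % 2 ≠ c}
          = {v | (f v : ℕ) % 2 = 1} := by
        ext v; simp only [Set.mem_setOf_eq, h]; omega
      rw [he, ncard_parity_one f, hN] at h1
      omega
    · have he : {v : Unit ⊕ (Fin (m-1) ⊕ Fin l) | (f v : ℕ) % 2 ≠ c}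
          = {v | (f v : ℕ) % 2 = 0} := by
        ext v; simp only [Set.mem_setOf_eq, h]; omega
      rw [he, ncard_parity_zero f, hN] at h1
      omega
  have hBQle : BQ.ncard ≤ l := by
    have h := Set.ncard_le_ncard (Set.subset_univ BQ) (Set.toFinite _)
    simpa [Set.ncard_univ] using h
  -- adjacency facts
  have adjP : ∀ i : Fin (m-1),
      (spider m l).Adj (Sum.inl ()) (Sum.inr (Sum.inl i)) := by
    intro i
    rw [spider, SimpleGraph.fromRel_adj]
    exact ⟨by simp, Or.inl (Or.inl ⟨i, rfl, rfl⟩)⟩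
  have adjQ0 : ∀ h : 0 < l,
      (spider m l).Adj (Sum.inl ()) (Sum.inr (Sum.inr ⟨0, h⟩)) := by
    intro h
    rw [spider, SimpleGraph.fromRel_adj]
    exact ⟨by simp, Or.inl (Or.inr (Or.inl ⟨h, rfl, rfl⟩))⟩
  have adjQQ : ∀ i j : Fin l, (i : ℕ) + 1 = (j : ℕ) →
      (spider m l).Adj (Sum.inr (Sum.inr i)) (Sum.inr (Sum.inr j)) := by
    intro i j hij
    rw [spider, SimpleGraph.fromRel_adj]
    refine ⟨?_, Or.inl (Or.inr (Or.inr ⟨i, j, hij, rfl, rfl⟩))⟩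
    intro hco
    have : i = j := by simpa using hco
    omega
  have memneg : ∀ a b, (spider m l).Adj a b → (f a : ℕ) % 2 ≠ (f b : ℕ) % 2 →
      s(a,b) ∈ negSet (spider m l) f := by
    intro a b hadj hpar
    exact ⟨hadj, hpar⟩
  set SP : Set (Sym2 (Unit ⊕ (Fin (m-1) ⊕ Fin l))) :=
    (fun i : Fin (m-1) => s(Sum.inl (), Sum.inr (Sum.inl i))) '' BP with hSPdef
  have hSPsub : SP ⊆ negSet (spider m l) f := by
    rintro e ⟨i, hi, rfl⟩
    exact memneg _ _ (adjP i) (Ne.symm hi)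
  have hSPcard : SP.ncard = BP.ncard := by
    rw [hSPdef]
    apply Set.ncard_image_of_injective
    intro a b h
    simpa [Sym2.eq_iff] using h
  -- main case split
  rcases Set.eq_empty_or_nonempty BQ with hBQ0 | hBQne
  · have h1 : (n+1)/2 ≤ BP.ncard := by
      rw [hBQ0] at hBadcard; simpa using hBadcard
    have h2 : BP.ncard ≤ negCount (spider m l) f := by
      rw [← hSPcard]
      exact Set.ncard_le_ncard hSPsub (Set.toFinite _)
    omega
  · set S : Set ℕ := {x | ∃ h : x < l, (⟨x, h⟩ : Fin l) ∈ BQ} with hSdef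
    have hSne : S.Nonempty := by
      obtain ⟨j, hj⟩ := hBQne
      exact ⟨(j : ℕ), (j.isLt), by simpa using hj⟩
    set t := sInf S with htdef
    obtain ⟨htl, htmem⟩ : t ∈ S := Nat.sInf_mem hSne
    have hmin : ∀ x, x < t → ¬ (∃ h : x < l, (⟨x, h⟩ : Fin l) ∈ BQ) := by
      intro x hx
      exact Nat.notMem_of_lt_sInf hx
    obtain ⟨a, e0mem⟩ : ∃ a, s(a, Sum.inr (Sum.inr (⟨t, htl⟩ : Fin l)))
        ∈ negSet (spider m l) f := by
      rcases Nat.eq_zero_or_pos t with h0 | hpos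
      · refine ⟨Sum.inl (), memneg _ _ ?_ (Ne.symm htmem)⟩
        have : (⟨t, htl⟩ : Fin l) = ⟨0, by omega⟩ := by simp [h0]
        rw [this]
        exact adjQ0 (by omega)
      · obtain ⟨s, hs⟩ : ∃ s, t = s + 1 := ⟨t - 1, by omega⟩
        have hsl : s < l := by omega
        have hprev : ¬ ((⟨s, hsl⟩ : Fin l) ∈ BQ) := by
          intro hmem
          exact hmin s (by omega) ⟨hsl, hmem⟩
        have hprev' : (f (Sum.inr (Sum.inr (⟨s, hsl⟩ : Fin l))) : ℕ) % 2 = c := by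
          by_contra hne
          exact hprev hne
        refine ⟨Sum.inr (Sum.inr ⟨s, hsl⟩), memneg _ _ (adjQQ _ _ (by simp [hs])) ?_⟩
        rw [hprev']
        exact Ne.symm htmem
    have he0notSP : s(a, Sum.inr (Sum.inr (⟨t, htl⟩ : Fin l))) ∉ SP := by
      rintro ⟨i, _, h⟩
      rw [Sym2.eq_iff] at h
      rcases h with ⟨h1, h2⟩ | ⟨h1, h2⟩
      · simp at h2
      · simp at h1
    have hfinal : BP.ncard + 1 ≤ negCount (spider m l) f := by
      have hsub : insert (s(a, Sum.inr (Sum.inr (⟨t, htl⟩ : Fin l)))) SP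
          ⊆ negSet (spider m l) f := Set.insert_subset e0mem hSPsub
      have h3 := Set.ncard_le_ncard hsub (Set.toFinite _)
      rw [Set.ncard_insert_of_notMem he0notSP (Set.toFinite _), hSPcard] at h3
      exact h3
    omega

/-- the labeling function for the optimal labeling -/
private def gfun (m l k : ℕ) : (Unit ⊕ (Fin (m - 1) ⊕ Fin l)) → ℕ
  | Sum.inl _ => 0
  | Sum.inr (Sum.inl i) =>
      if (i : ℕ) < k - l then 2 * (l + (i : ℕ)) + 1 else 2 * ((i : ℕ) - (k - l)) + 2
  | Sum.inr (Sum.inr j) => 2 * (j : ℕ) + 1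

private lemma spider_upper (m l n : ℕ) (hm : 1 ≤ m) (horder : m + l = n + 1)
    (hl1 : 1 ≤ l) (hl2 : l ≤ (n + 1) / 2) :
    ∃ f, negCount (spider m l) f ≤ (n+1)/2 - l + 1 := by
  classical
  have hN := spider_card m l n hm horder
  set k := (n+1)/2 with hk
  have hn1 : 1 ≤ n := by omega
  have hkn : k ≤ n := by omega
  have hbound : ∀ v, gfun m l k v < Fintype.card (Unit ⊕ (Fin (m-1) ⊕ Fin l)) := by
    rw [hN]
    rintro (⟨⟩ | (i | j))
    · simp [gfun]
    · have hi := i.isLt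
      simp only [gfun]
      split_ifs with h
      · omega
      · omega
    · have hj := j.isLt
      simp only [gfun]
      omega
  have hinj : Function.Injective
      (fun v => (⟨gfun m l k v, hbound v⟩ : Fin (Fintype.card (Unit ⊕ (Fin (m-1) ⊕ Fin l))))) := by
    intro v w h
    have h' : gfun m l k v = gfun m l k w := by
      simpa using congrArg Fin.val h
    clear h
    rcases v with ⟨⟩ | (i | j) <;> rcases w with ⟨⟩ | (i' | j') <;>
      simp only [gfun] at h'
    · exact congrArg Sum.inl (Subsingleton.elim _ _)
    · split_ifs at h' <;> omega
    · omega
    · split_ifs at h' <;> omega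
    · have hii : (i : ℕ) = (i' : ℕ) := by split_ifs at h' <;> omega
      exact congrArg _ (congrArg _ (Fin.ext hii))
    · split_ifs at h' <;> omega
    · omega
    · split_ifs at h' <;> omega
    · have hjj : (j : ℕ) = (j' : ℕ) := by omega
      exact congrArg _ (congrArg _ (Fin.ext hjj))
  have hbij : Function.Bijective
      (fun v => (⟨gfun m l k v, hbound v⟩ : Fin (Fintype.card (Unit ⊕ (Fin (m-1) ⊕ Fin l))))) :=
    (Fintype.bijective_iff_injective_and_card _).mpr ⟨hinj, by simp⟩
  set f₀ := Equiv.ofBijective _ hbij with hf₀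
  have hval : ∀ v, (f₀ v : ℕ) = gfun m l k v := fun _ => rfl
  have h0l : 0 < l := hl1
  set T : Set (Sym2 (Unit ⊕ (Fin (m-1) ⊕ Fin l))) :=
    (fun i : Fin (m-1) => s(Sum.inl (), Sum.inr (Sum.inl i))) '' {i | (i:ℕ) < k - l}
      ∪ {s(Sum.inl (), Sum.inr (Sum.inr (⟨0, h0l⟩ : Fin l)))} with hT
  have key : ∀ a b, s(a,b) ∈ negSet (spider m l) f₀ → s(a,b) ∈ T := by
    rintro a b ⟨hadj, hpar⟩
    have hadj' : (spider m l).Adj a b := hadj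
    have hpar' : (f₀ a : ℕ) % 2 ≠ (f₀ b : ℕ) % 2 := hpar
    rw [hval a, hval b] at hpar'
    rw [spider, SimpleGraph.fromRel_adj] at hadj'
    obtain ⟨hne, hrel | hrel⟩ := hadj'
    · rcases hrel with ⟨i, rfl, rfl⟩ | ⟨h, rfl, rfl⟩ | ⟨i, j, hij, rfl, rfl⟩
      · simp only [gfun] at hpar'
        have hik : (i : ℕ) < k - l := by
          by_contra hnot
          rw [if_neg hnot] at hpar'
          omega
        exact Set.mem_union_left _ ⟨i, hik, rfl⟩
      · exact Set.mem_union_right _ rfl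
      · simp only [gfun] at hpar'
        omega
    · rcases hrel with ⟨i, rfl, rfl⟩ | ⟨h, rfl, rfl⟩ | ⟨i, j, hij, rfl, rfl⟩
      · rw [Sym2.eq_swap]
        simp only [gfun] at hpar'
        have hik : (i : ℕ) < k - l := by
          by_contra hnot
          rw [if_neg hnot] at hpar'
          omega
        exact Set.mem_union_left _ ⟨i, hik, rfl⟩
      · rw [Sym2.eq_swap]
        exact Set.mem_union_right _ rfl
      · simp only [gfun] at hpar'
        omega
  have hsub : negSet (spider m l) f₀ ⊆ T := by
    intro e
    induction e using Sym2.ind with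
    | _ a b => exact key a b
  have hTcard : T.ncard ≤ (k - l) + 1 := by
    refine le_trans (Set.ncard_union_le _ _) ?_
    have h1 : ((fun i : Fin (m-1) =>
        (s(Sum.inl (), Sum.inr (Sum.inl i)) : Sym2 (Unit ⊕ (Fin (m-1) ⊕ Fin l)))) ''
        {i : Fin (m-1) | (i:ℕ) < k - l}).ncard ≤ k - l := by
      refine le_trans (Set.ncard_image_le (Set.toFinite _)) ?_
      rw [Set.ncard_eq_toFinset_card', Set.toFinset_setOf]
      calc (Finset.univ.filter (fun i : Fin (m-1) => (i:ℕ) < k - l)).card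
          ≤ (Finset.range (k-l)).card := by
            refine Finset.card_le_card_of_injOn (fun i => (i:ℕ)) ?_ ?_
            · intro a ha
              simp only [Finset.coe_filter, Finset.mem_univ, true_and, Set.mem_setOf_eq] at ha
              simpa using ha
            · intro a _ b _ hab
              exact Fin.val_injective hab
        _ = k - l := Finset.card_range _
    have h2 : ({s(Sum.inl (), Sum.inr (Sum.inr (⟨0, h0l⟩ : Fin l)))} :
        Set (Sym2 (Unit ⊕ (Fin (m-1) ⊕ Fin l)))).ncard = 1 := Set.ncard_singleton _
    omega
  refine ⟨f₀, ?_⟩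
  exact le_trans (Set.ncard_le_ncard hsub (Set.toFinite _)) hTcard

/-- For the spider of order n+1 with one path branch of length l,
σ⁻(S_m(l)) = ⌊(n+1)/2⌋ − l + 1, for 1 ≤ l ≤ ⌊(n+1)/2⌋. -/
theorem rna_spider (m l n : ℕ) (hm : 1 ≤ m) (horder : m + l = n + 1)
    (hl1 : 1 ≤ l) (hl2 : l ≤ (n + 1) / 2) :
    rna (spider m l) = (n + 1) / 2 - l + 1 := by
  have hlow : ∀ f, (n+1)/2 - l + 1 ≤ negCount (spider m l) f :=
    spider_lower m l n hm horder hl1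
  obtain ⟨f₀, hup⟩ := spider_upper m l n hm horder hl1 hl2
  refine le_antisymm ?_ ?_
  · exact le_trans (Nat.sInf_le ⟨f₀, rfl⟩) hup
  · exact le_csInf ⟨negCount (spider m l) f₀, f₀, rfl⟩ (by rintro b ⟨f, rfl⟩; exact hlow f)
end
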